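/- arXiv:2408.08606 — 11 statements merged into one kernel-verified Lean document; each statement's English description precedes it below -/
import Mathlib

section
/- Let a and b be linearly independent idempotents of A satisfying a·b = ρ·a + ξ·b and b·a = ξ'·a + ρ'·b for scalars ρ, ξ, ξ', ρ' ∈ F. Then (a·b)·a = a·(b·a) if and only if ρ(1 − ρ') = ξ'(1 − ξ). -/
theorem mul_mul_sub_mul_mul_eq_smul {R A : Type*} [CommRing R] [NonUnitalNonAssocRing A]
    [Module R A] [SMulCommClass R A A] [IsScalarTower R A A]
    {a b : A} (ha : a * a = a) {ρ ξ ξ' ρ' : R}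
    (hab : a * b = ρ • a + ξ • b) (hba : b * a = ξ' • a + ρ' • b) :
    (a * b) * a - a * (b * a) = (ρ * (1 - ρ') - ξ' * (1 - ξ)) • a := by
  rw [hab, hba, add_mul, mul_add, smul_mul_assoc, smul_mul_assoc,
    mul_smul_comm, mul_smul_comm, ha, hab, hba]
  module

theorem stmt_0_general {F A : Type*} [Field F] [NonUnitalNonAssocRing A] [Module F A]
    [SMulCommClass F A A] [IsScalarTower F A A]
    (a b : A) (hindep : LinearIndependent F ![a, b])
    (ha : a * a = a)
    (ρ ξ ξ' ρ' : F)
    (hab : a * b = ρ • a + ξ • b) (hba : b * a = ξ' • a + ρ' • b) :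
    (a * b) * a = a * (b * a) ↔ ρ * (1 - ρ') = ξ' * (1 - ξ) := by
  have ha_ne : a ≠ 0 := hindep.ne_zero 0
  rw [← sub_eq_zero, mul_mul_sub_mul_mul_eq_smul ha hab hba, smul_eq_zero,
    or_iff_left ha_ne, sub_eq_zero]

/-- Let `a` and `b` be linearly independent idempotents of `A` satisfying
`a·b = ρ·a + ξ·b` and `b·a = ξ'·a + ρ'·b`.  Then `(a·b)·a = a·(b·a)` if and
only if `ρ(1 − ρ') = ξ'(1 − ξ)`. -/
theorem stmt_0 {F A : Type*} [Field F] [NonUnitalNonAssocRing A] [Module F A]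
    [SMulCommClass F A A] [IsScalarTower F A A]
    (hchar : (2 : F) ≠ 0)
    (a b : A) (hindep : LinearIndependent F ![a, b])
    (ha : a * a = a) (hb : b * b = b)
    (ρ ξ ξ' ρ' : F)
    (hab : a * b = ρ • a + ξ • b) (hba : b * a = ξ' • a + ρ' • b) :
    (a * b) * a = a * (b * a) ↔ ρ * (1 - ρ') = ξ' * (1 - ξ) :=
  stmt_0_general a b hindep ha ρ ξ ξ' ρ' hab hba
end

section
/- Let ρ, ξ, ξ', ρ' be elements of a field F. Then the two equations ρ(1 − ρ') = ξ'(1 − ξ) and ρ'(1 − ρ) = ξ(1 − ξ') hold simultaneously if and only if either (ρ = ξ' and ρ' = ξ) or (ρ + ξ = 1 and ρ' + ξ' = 1). -/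
/-!
Subtracting the two equations gives `ρ - ξ' = ρ' - ξ`; substituting this back into the first
equation factors it as `(ρ - ξ') * (ρ + ξ - 1) = 0`, and each factor vanishing gives one of the
two alternatives.
-/

section

variable {R : Type*} [CommRing R] {ρ ξ ξ' ρ' : R}

lemma sub_eq_sub_of_mul_one_sub_eq (h₁ : ρ * (1 - ρ') = ξ' * (1 - ξ))
    (h₂ : ρ' * (1 - ρ) = ξ * (1 - ξ')) : ρ - ξ' = ρ' - ξ := by
  linear_combination h₁ - h₂

lemma sub_mul_add_sub_one_eq_zero (h₁ : ρ * (1 - ρ') = ξ' * (1 - ξ))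
    (h₂ : ρ' * (1 - ρ) = ξ * (1 - ξ')) : (ρ - ξ') * (ρ + ξ - 1) = 0 := by
  linear_combination -h₁ + ρ * sub_eq_sub_of_mul_one_sub_eq h₁ h₂

lemma mul_one_sub_eq_of_add_eq_one (h₁ : ρ + ξ = 1) (h₂ : ρ' + ξ' = 1) :
    ρ * (1 - ρ') = ξ' * (1 - ξ) ∧ ρ' * (1 - ρ) = ξ * (1 - ξ') :=
  ⟨by linear_combination (1 - ρ') * h₁ + ξ * h₂ - h₂,
    by linear_combination (1 - ρ') * h₁ + ξ * h₂ - h₁⟩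

lemma eq_and_eq_or_add_eq_one_of_mul_one_sub_eq [NoZeroDivisors R]
    (h₁ : ρ * (1 - ρ') = ξ' * (1 - ξ)) (h₂ : ρ' * (1 - ρ) = ξ * (1 - ξ')) :
    (ρ = ξ' ∧ ρ' = ξ) ∨ (ρ + ξ = 1 ∧ ρ' + ξ' = 1) := by
  have hsub := sub_eq_sub_of_mul_one_sub_eq h₁ h₂
  rcases mul_eq_zero.mp (sub_mul_add_sub_one_eq_zero h₁ h₂) with h | h
  · exact Or.inl ⟨by linear_combination h, by linear_combination h - hsub⟩
  · exact Or.inr ⟨by linear_combination h, by linear_combination h - hsub⟩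

end

/-- Let `ρ, ξ, ξ', ρ'` be elements of a field `F`.  Then the two equations
`ρ(1 − ρ') = ξ'(1 − ξ)` and `ρ'(1 − ρ) = ξ(1 − ξ')` hold simultaneously if and
only if either (`ρ = ξ'` and `ρ' = ξ`) or (`ρ + ξ = 1` and `ρ' + ξ' = 1`). -/
theorem stmt_1 {F : Type*} [Field F] (ρ ξ ξ' ρ' : F) :
    (ρ * (1 - ρ') = ξ' * (1 - ξ) ∧ ρ' * (1 - ρ) = ξ * (1 - ξ')) ↔
      ((ρ = ξ' ∧ ρ' = ξ) ∨ (ρ + ξ = 1 ∧ ρ' + ξ' = 1)) := by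
  refine ⟨fun ⟨h₁, h₂⟩ => eq_and_eq_or_add_eq_one_of_mul_one_sub_eq h₁ h₂, ?_⟩
  rintro (⟨rfl, rfl⟩ | ⟨h₁, h₂⟩)
  · exact ⟨rfl, rfl⟩
  · exact mul_one_sub_eq_of_add_eq_one h₁ h₂
end

section
/- Let a and b be linearly independent idempotents of A satisfying a·b = b·a = ρ·a + ξ·b for scalars ρ, ξ ∈ F. Then the element v := ρ·a + (ξ − 1)·b satisfies a·v = v·a = ξ·v, and v·v ∈ F·a if and only if (ξ − 1)·((ξ − 1) + 2ρξ) = 0. -/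
/-!
Since `a` is idempotent and `a·b = b·a = ρ·a + ξ·b`, bilinearity gives `a·v = v·a = ξ·v`
and `v·v = (ρ² + 2ρ²(ξ - 1))·a + (ξ - 1)((ξ - 1) + 2ρξ)·b`. As `a, b` are linearly
independent, such a combination lies in `F·a` exactly when its `b`-coefficient vanishes.
-/

theorem LinearIndependent.smul_add_smul_mem_span_singleton_iff {R M : Type*} [Ring R]
    [AddCommGroup M] [Module R M] {a b : M} (hab : LinearIndependent R ![a, b]) (x y : R) :
    x • a + y • b ∈ Submodule.span R {a} ↔ y = 0 := by
  refine ⟨fun h => ?_, fun hy => ?_⟩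
  · obtain ⟨c, hc⟩ := Submodule.mem_span_singleton.mp h
    have hzero : (x - c) • a + y • b = 0 := by rw [sub_smul, hc]; abel
    exact (LinearIndependent.pair_iff.mp hab _ _ hzero).2
  · rw [hy, zero_smul, add_zero]
    exact Submodule.smul_mem _ _ (Submodule.mem_span_singleton_self a)

section IdempotentPair

variable {R A : Type*} [CommRing R] [NonUnitalNonAssocRing A] [Module R A]
  {a b : A} {ρ ξ : R}

theorem mul_smul_add_sub_one_smul [SMulCommClass R A A]
    (ha : a * a = a) (hab : a * b = ρ • a + ξ • b) :
    a * (ρ • a + (ξ - 1) • b) = ξ • (ρ • a + (ξ - 1) • b) := by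
  simp only [mul_add, mul_smul_comm, ha, hab]
  module

theorem smul_add_sub_one_smul_mul [IsScalarTower R A A]
    (ha : a * a = a) (hba : b * a = ρ • a + ξ • b) :
    (ρ • a + (ξ - 1) • b) * a = ξ • (ρ • a + (ξ - 1) • b) := by
  simp only [add_mul, smul_mul_assoc, ha, hba]
  module

theorem smul_add_sub_one_smul_mul_self [SMulCommClass R A A] [IsScalarTower R A A]
    (ha : a * a = a) (hb : b * b = b)
    (hab : a * b = ρ • a + ξ • b) (hba : b * a = ρ • a + ξ • b) :
    (ρ • a + (ξ - 1) • b) * (ρ • a + (ξ - 1) • b) =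
      (ρ * ρ + 2 * ρ * ρ * (ξ - 1)) • a + ((ξ - 1) * ((ξ - 1) + 2 * ρ * ξ)) • b := by
  simp only [mul_add, add_mul, smul_mul_assoc, mul_smul_comm, ha, hb, hab, hba]
  module

end IdempotentPair

theorem stmt_2_general {F A : Type*} [Field F] [NonUnitalNonAssocRing A] [Module F A]
    [SMulCommClass F A A] [IsScalarTower F A A]
    (a b : A) (hindep : LinearIndependent F ![a, b])
    (ha : a * a = a) (hb : b * b = b)
    (ρ ξ : F)
    (hab : a * b = ρ • a + ξ • b) (hba : b * a = ρ • a + ξ • b)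
    (v : A) (hv : v = ρ • a + (ξ - 1) • b) :
    a * v = ξ • v ∧ v * a = ξ • v ∧
      (v * v ∈ Submodule.span F {a} ↔ (ξ - 1) * ((ξ - 1) + 2 * ρ * ξ) = 0) := by
  subst hv
  refine ⟨mul_smul_add_sub_one_smul ha hab, smul_add_sub_one_smul_mul ha hba, ?_⟩
  rw [smul_add_sub_one_smul_mul_self ha hb hab hba]
  exact hindep.smul_add_smul_mem_span_singleton_iff _ _

/-- Let `a` and `b` be linearly independent idempotents of `A` satisfying
`a·b = b·a = ρ·a + ξ·b`.  Then the element `v := ρ·a + (ξ − 1)·b` satisfies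
`a·v = v·a = ξ·v`, and `v·v ∈ F·a` if and only if
`(ξ − 1)·((ξ − 1) + 2ρξ) = 0`. -/
theorem stmt_2 {F A : Type*} [Field F] [NonUnitalNonAssocRing A] [Module F A]
    [SMulCommClass F A A] [IsScalarTower F A A]
    (hchar : (2 : F) ≠ 0)
    (a b : A) (hindep : LinearIndependent F ![a, b])
    (ha : a * a = a) (hb : b * b = b)
    (ρ ξ : F)
    (hab : a * b = ρ • a + ξ • b) (hba : b * a = ρ • a + ξ • b)
    (v : A) (hv : v = ρ • a + (ξ - 1) • b) :
    a * v = ξ • v ∧ v * a = ξ • v ∧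
      (v * v ∈ Submodule.span F {a} ↔ (ξ - 1) * ((ξ - 1) + 2 * ρ * ξ) = 0) :=
  stmt_2_general a b hindep ha hb ρ ξ hab hba v hv
end

section
/- Let a and b be idempotents of A satisfying a·b = ρ·a + ξ·b and b·a = ξ'·a + ρ'·b for scalars ρ, ξ, ξ', ρ' ∈ F with ρ + ξ = 1 and ρ' + ξ' = 1. Then: (1) a·(b − a) = ξ·(b − a) and (b − a)·a = ρ'·(b − a); (2) (b − a)·(b − a) = (ξ' − ξ)·(b − a); (3) if ξ ≠ ξ', then the element (ξ' − ξ)⁻¹·(b − a) is an idempotent. -/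
/-! Writing `ρ = 1 - ξ`, the relation `a·b = ρ·a + ξ·b` says exactly that left multiplication by the
idempotent `a` acts on `b - a` as the scalar `ξ`; symmetrically `b` acts on `a - b` as `ξ'`.
Subtracting the two actions gives `(b − a)² = (ξ' − ξ)·(b − a)`, and any `x` with `x² = c·x`,
`c ≠ 0`, rescales to the idempotent `c⁻¹·x`. -/

section

variable {R A : Type*} [CommRing R] [NonUnitalNonAssocRing A] [Module R A]

theorem mul_sub_eq_smul_sub_of_mul_eq {e f : A} (he : e * e = e) {ρ ξ : R}
    (hef : e * f = ρ • e + ξ • f) (hsum : ρ + ξ = 1) : e * (f - e) = ξ • (f - e) := by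
  rw [mul_sub, hef, he, eq_sub_of_add_eq hsum]
  module

theorem sub_mul_eq_smul_sub_of_mul_eq {e f : A} (he : e * e = e) {ρ ξ : R}
    (hfe : f * e = ξ • e + ρ • f) (hsum : ρ + ξ = 1) : (f - e) * e = ρ • (f - e) := by
  rw [sub_mul, hfe, he, eq_sub_of_add_eq' hsum]
  module

end

theorem IsIdempotentElem.inv_smul_of_mul_self_eq_smul {F A : Type*} [Field F]
    [NonUnitalNonAssocRing A] [Module F A] [SMulCommClass F A A] [IsScalarTower F A A]
    {x : A} {c : F} (hx : x * x = c • x) (hc : c ≠ 0) : IsIdempotentElem (c⁻¹ • x) := by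
  rw [IsIdempotentElem, smul_mul_assoc, mul_smul_comm, hx, smul_smul, smul_smul,
    mul_assoc, inv_mul_cancel₀ hc, mul_one]

theorem stmt_3_general {F A : Type*} [Field F] [NonUnitalNonAssocRing A] [Module F A]
    [SMulCommClass F A A] [IsScalarTower F A A]
    (a b : A) (ha : a * a = a) (hb : b * b = b)
    (ρ ξ ξ' ρ' : F)
    (hab : a * b = ρ • a + ξ • b) (hba : b * a = ξ' • a + ρ' • b)
    (h1 : ρ + ξ = 1) (h2 : ρ' + ξ' = 1) :
    (a * (b - a) = ξ • (b - a) ∧ (b - a) * a = ρ' • (b - a)) ∧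
    (b - a) * (b - a) = (ξ' - ξ) • (b - a) ∧
    (ξ ≠ ξ' →
      ((ξ' - ξ)⁻¹ • (b - a)) * ((ξ' - ξ)⁻¹ • (b - a)) = (ξ' - ξ)⁻¹ • (b - a)) := by
  have hleft_a : a * (b - a) = ξ • (b - a) := mul_sub_eq_smul_sub_of_mul_eq ha hab h1
  have hleft_b : b * (a - b) = ξ' • (a - b) :=
    mul_sub_eq_smul_sub_of_mul_eq hb (hba.trans (add_comm _ _)) h2
  have hsq : (b - a) * (b - a) = (ξ' - ξ) • (b - a) := by
    rw [sub_mul (b := a), hleft_a, ← neg_sub a b, mul_neg, hleft_b]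
    module
  refine ⟨⟨hleft_a, sub_mul_eq_smul_sub_of_mul_eq ha hba h2⟩, hsq, fun hne => ?_⟩
  exact (IsIdempotentElem.inv_smul_of_mul_self_eq_smul hsq (sub_ne_zero.mpr hne.symm)).eq

/-- Let `a` and `b` be idempotents of `A` satisfying `a·b = ρ·a + ξ·b` and
`b·a = ξ'·a + ρ'·b` with `ρ + ξ = 1` and `ρ' + ξ' = 1`.  Then:
(1) `a·(b − a) = ξ·(b − a)` and `(b − a)·a = ρ'·(b − a)`;
(2) `(b − a)·(b − a) = (ξ' − ξ)·(b − a)`;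
(3) if `ξ ≠ ξ'`, then `(ξ' − ξ)⁻¹·(b − a)` is an idempotent. -/
theorem stmt_3 {F A : Type*} [Field F] [NonUnitalNonAssocRing A] [Module F A]
    [SMulCommClass F A A] [IsScalarTower F A A]
    (hchar : (2 : F) ≠ 0)
    (a b : A) (ha : a * a = a) (hb : b * b = b)
    (ρ ξ ξ' ρ' : F)
    (hab : a * b = ρ • a + ξ • b) (hba : b * a = ξ' • a + ρ' • b)
    (h1 : ρ + ξ = 1) (h2 : ρ' + ξ' = 1) :
    (a * (b - a) = ξ • (b - a) ∧ (b - a) * a = ρ' • (b - a)) ∧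
    (b - a) * (b - a) = (ξ' - ξ) • (b - a) ∧
    (ξ ≠ ξ' →
      ((ξ' - ξ)⁻¹ • (b - a)) * ((ξ' - ξ)⁻¹ • (b - a)) = (ξ' - ξ)⁻¹ • (b - a)) :=
  stmt_3_general a b ha hb ρ ξ ξ' ρ' hab hba h1 h2
end

section
/- Let a and b be idempotents of A satisfying a·b = ρ·a + ξ·b and b·a = ξ'·a + ρ'·b for scalars ρ, ξ, ξ', ρ' ∈ F with ξ' + ρ = 1 and ρ' + ξ = 1. Then for every β ∈ F with β ≠ −1, the element (1 + β)⁻¹·(a + β·b) is an idempotent. -/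
/-! The relations give `a * b + b * a = a + b`, so `a + β • b` squares to `(1 + β) • (a + β • b)`;
rescaling by `(1 + β)⁻¹` then yields an idempotent. -/

section

variable {R A : Type*} [CommRing R] [NonUnitalNonAssocRing A] [Module R A]

theorem mul_add_mul_eq_add_of_mul_eq {a b : A} {ρ ξ ξ' ρ' : R}
    (hab : a * b = ρ • a + ξ • b) (hba : b * a = ξ' • a + ρ' • b)
    (h1 : ξ' + ρ = 1) (h2 : ρ' + ξ = 1) : a * b + b * a = a + b := by
  rw [hab, hba]
  linear_combination (norm := module) h1 • a + h2 • b

theorem add_smul_mul_self_of_mul_add_mul_eq_add [SMulCommClass R A A] [IsScalarTower R A A]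
    {a b : A} (ha : a * a = a) (hb : b * b = b)
    (hsum : a * b + b * a = a + b) (β : R) :
    (a + β • b) * (a + β • b) = (1 + β) • (a + β • b) := by
  have hexpand : (a + β • b) * (a + β • b) = a * a + β • (a * b + b * a) + (β * β) • (b * b) := by
    simp only [add_mul, mul_add, smul_mul_assoc, mul_smul_comm, smul_smul, smul_add]
    abel
  rw [hexpand, ha, hb, hsum]
  module

theorem mul_self_inv_smul_eq_of_mul_self_eq_smul {K : Type*} [Field K] [Module K A]
    [SMulCommClass K A A] [IsScalarTower K A A] {c : A} {t : K} (ht : t ≠ 0)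
    (hc : c * c = t • c) : (t⁻¹ • c) * (t⁻¹ • c) = t⁻¹ • c := by
  rw [smul_mul_smul_comm, hc, smul_smul, mul_assoc, inv_mul_cancel₀ ht, mul_one]

end

theorem stmt_4_general {F A : Type*} [Field F] [NonUnitalNonAssocRing A] [Module F A]
    [SMulCommClass F A A] [IsScalarTower F A A]
    (a b : A) (ha : a * a = a) (hb : b * b = b)
    (ρ ξ ξ' ρ' : F)
    (hab : a * b = ρ • a + ξ • b) (hba : b * a = ξ' • a + ρ' • b)
    (h1 : ξ' + ρ = 1) (h2 : ρ' + ξ = 1) :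
    ∀ β : F, β ≠ -1 →
      ((1 + β)⁻¹ • (a + β • b)) * ((1 + β)⁻¹ • (a + β • b)) =
        (1 + β)⁻¹ • (a + β • b) := by
  intro β hβ
  have hβ' : 1 + β ≠ 0 := fun h => hβ (eq_neg_of_add_eq_zero_right h)
  exact mul_self_inv_smul_eq_of_mul_self_eq_smul hβ'
    (add_smul_mul_self_of_mul_add_mul_eq_add ha hb (mul_add_mul_eq_add_of_mul_eq hab hba h1 h2) β)

/-- Let `a` and `b` be idempotents of `A` satisfying `a·b = ρ·a + ξ·b` and
`b·a = ξ'·a + ρ'·b` with `ξ' + ρ = 1` and `ρ' + ξ = 1`.  Then for every `β ≠ −1`,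
the element `(1 + β)⁻¹·(a + β·b)` is an idempotent. -/
theorem stmt_4 {F A : Type*} [Field F] [NonUnitalNonAssocRing A] [Module F A]
    [SMulCommClass F A A] [IsScalarTower F A A]
    (hchar : (2 : F) ≠ 0)
    (a b : A) (ha : a * a = a) (hb : b * b = b)
    (ρ ξ ξ' ρ' : F)
    (hab : a * b = ρ • a + ξ • b) (hba : b * a = ξ' • a + ρ' • b)
    (h1 : ξ' + ρ = 1) (h2 : ρ' + ξ = 1) :
    ∀ β : F, β ≠ -1 →
      ((1 + β)⁻¹ • (a + β • b)) * ((1 + β)⁻¹ • (a + β • b)) =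
        (1 + β)⁻¹ • (a + β • b) :=
  stmt_4_general a b ha hb ρ ξ ξ' ρ' hab hba h1 h2
end

section
/- Let B : A × A → F be a symmetric bilinear form that is Frobenius, i.e., B(x·y, z) = B(x, y·z) for all x, y, z ∈ A, let a ∈ A be an idempotent, and let z ∈ A satisfy a·z = μ·z and z·a = ν·z for scalars μ, ν ∈ F with (μ, ν) ≠ (1, 1). Then B(a, z) = 0. -/
/-! Using `a = a·a` and invariance, `B(a, z) = B(a, a·z) = μ B(a, z)`, and symmetrically
`B(a, z) = B(z·a, a) = ν B(a, z)`; so `B(a, z) ≠ 0` would force `μ = ν = 1`. -/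

section Frobenius

variable {F A : Type*} [CommSemiring F] [NonUnitalNonAssocSemiring A] [Module F A]
  {B : A →ₗ[F] A →ₗ[F] F} {a z : A} {c : F}

theorem apply_idempotent_eq_mul_of_mul_left_eq_smul
    (hfrob : ∀ x y z : A, B (x * y) z = B x (y * z)) (ha : a * a = a) (hz : a * z = c • z) :
    B a z = c * B a z := by
  conv_lhs => rw [← ha, hfrob, hz]
  rw [map_smul, smul_eq_mul]

theorem apply_idempotent_eq_mul_of_mul_right_eq_smul (hsymm : ∀ x y : A, B x y = B y x)
    (hfrob : ∀ x y z : A, B (x * y) z = B x (y * z)) (ha : a * a = a) (hz : z * a = c • z) :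
    B a z = c * B a z := by
  rw [hsymm a z]
  conv_lhs => rw [← ha, ← hfrob, hz]
  rw [map_smul, LinearMap.smul_apply, smul_eq_mul]

end Frobenius

theorem stmt_5_general {F A : Type*} [Field F] [NonUnitalNonAssocRing A] [Module F A]
    (B : A →ₗ[F] A →ₗ[F] F)
    (hsymm : ∀ x y : A, B x y = B y x)
    (hfrob : ∀ x y z : A, B (x * y) z = B x (y * z))
    (a : A) (ha : a * a = a)
    (z : A) (μ ν : F) (hz1 : a * z = μ • z) (hz2 : z * a = ν • z)
    (hμν : (μ, ν) ≠ ((1 : F), (1 : F))) :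
    B a z = 0 := by
  by_contra hBaz
  have hμ : μ = 1 :=
    (mul_eq_right₀ hBaz).mp (apply_idempotent_eq_mul_of_mul_left_eq_smul hfrob ha hz1).symm
  have hν : ν = 1 :=
    (mul_eq_right₀ hBaz).mp
      (apply_idempotent_eq_mul_of_mul_right_eq_smul hsymm hfrob ha hz2).symm
  exact hμν (by rw [hμ, hν])

/-- Let `B` be a symmetric Frobenius bilinear form on `A`, `a` an idempotent,
and `z` an element with `a·z = μ·z`, `z·a = ν·z` and `(μ, ν) ≠ (1, 1)`.
Then `B(a, z) = 0`. -/
theorem stmt_5 {F A : Type*} [Field F] [NonUnitalNonAssocRing A] [Module F A]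
    [SMulCommClass F A A] [IsScalarTower F A A]
    (hchar : (2 : F) ≠ 0)
    (B : A →ₗ[F] A →ₗ[F] F)
    (hsymm : ∀ x y : A, B x y = B y x)
    (hfrob : ∀ x y z : A, B (x * y) z = B x (y * z))
    (a : A) (ha : a * a = a)
    (z : A) (μ ν : F) (hz1 : a * z = μ • z) (hz2 : z * a = ν • z)
    (hμν : (μ, ν) ≠ ((1 : F), (1 : F))) :
    B a z = 0 :=
  stmt_5_general B hsymm hfrob a ha z μ ν hz1 hz2 hμν
end

section
/- Let a ∈ A be an idempotent, let (μ₁,ν₁), …, (μ_n,ν_n) be pairwise distinct pairs in F×F, none equal to (0,0) or to (1,1), and suppose y = y₁ + y₀ + Σ_{i=1}^n y_i where a·y₁ = y₁·a = y₁, a·y₀ = y₀·a = 0, and a·y_i = μ_i·y_i, y_i·a = ν_i·y_i for each i. Then y₁, y₀, and each y_i belong to the non-unital subalgebra of A generated by {a, y} (the smallest subspace of A containing a and y and closed under multiplication). -/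
/-!
For coefficient vectors `c : ι → F`, the condition `∑ cᵢ • vᵢ ∈ M` cuts out a subspace of `F^ι`.
Left and right multiplication by `a` act on it as pointwise multiplication by `μ` and `ν`, so
it is stable under the whole subalgebra of `F^ι` generated by `μ` and `ν`. As the pairs
`(μᵢ, νᵢ)` are distinct, this subalgebra separates the points of the finite set `ι` and hence
contains every indicator `δᵢ`. Applying `δᵢ` to the all-ones vector, which lies in the subspace
because `∑ vᵢ = y ∈ M`, gives `vᵢ ∈ M`. The summands `y₁` and `y₀` are joint eigenvectors for
the pairs `(1, 1)` and `(0, 0)`.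
-/

open Finset Function Module

theorem Subalgebra.pi_single_one_mem_of_separates {F ι : Type*} [Field F] [Fintype ι]
    [DecidableEq ι] {S : Subalgebra F (ι → F)} (hS : ∀ j k, j ≠ k → ∃ s ∈ S, s j ≠ s k)
    (j : ι) : Pi.single j 1 ∈ S := by
  have hfactor : ∀ k, ∃ t ∈ S, t j = 1 ∧ (k ≠ j → t k = 0) := by
    intro k
    by_cases hkj : k = j
    · exact ⟨1, S.one_mem, rfl, fun h => absurd hkj h⟩
    obtain ⟨s, hsS, hs⟩ := hS j k (Ne.symm hkj)
    refine ⟨(s j - s k)⁻¹ • (s - algebraMap F _ (s k)),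
      S.smul_mem (S.sub_mem hsS (S.algebraMap_mem _)) _, ?_, fun _ => ?_⟩
    · simp [inv_mul_cancel₀ (sub_ne_zero.mpr hs)]
    · simp
  choose t htS htj htk using hfactor
  convert S.prod_mem (fun k _ => htS k) (t := univ)
  funext l
  rw [Finset.prod_apply, Pi.single_apply]
  split_ifs with hlj
  · subst hlj
    exact (prod_eq_one fun k _ => htj k).symm
  · exact (prod_eq_zero (f := fun k => t k l) (mem_univ l) (htk l hlj)).symm

section JointEigenvectors

variable {F V ι : Type*} [Field F] [AddCommGroup V] [Module F V] [Fintype ι] {v : ι → V}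

theorem Module.End.apply_linearCombination_of_mem_eigenspace (T : End F V) {μ : ι → F}
    (hv : ∀ i, v i ∈ T.eigenspace (μ i)) (c : ι → F) :
    T (Fintype.linearCombination F v c) = Fintype.linearCombination F v (μ * c) := by
  simp only [Fintype.linearCombination_apply, map_sum, map_smul,
    End.mem_eigenspace_iff.mp (hv _), smul_smul, Pi.mul_apply, mul_comm]

theorem Submodule.mem_of_sum_mem_of_mem_eigenspace (L R : End F V) {M : Submodule F V}
    (hL : ∀ x ∈ M, L x ∈ M) (hR : ∀ x ∈ M, R x ∈ M) {μ ν : ι → F}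
    (hdist : Injective fun i => (μ i, ν i))
    (hLv : ∀ i, v i ∈ L.eigenspace (μ i)) (hRv : ∀ i, v i ∈ R.eigenspace (ν i))
    (hsum : ∑ i, v i ∈ M) (i : ι) : v i ∈ M := by
  classical
  set S := M.comap (Fintype.linearCombination F v)
  have hstab : ∀ h ∈ Algebra.adjoin F {μ, ν}, ∀ c ∈ S, h * c ∈ S := by
    intro h hh
    induction hh using Algebra.adjoin_induction with
    | mem h hgen =>
      rcases hgen with rfl | rfl <;> intro c hc
      · simpa [S, L.apply_linearCombination_of_mem_eigenspace hLv] using hL _ hc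
      · simpa [S, R.apply_linearCombination_of_mem_eigenspace hRv] using hR _ hc
    | algebraMap r =>
      exact fun c hc => by simpa [Algebra.algebraMap_eq_smul_one] using S.smul_mem r hc
    | add h₁ h₂ _ _ ih₁ ih₂ =>
      exact fun c hc => by simpa [add_mul] using S.add_mem (ih₁ c hc) (ih₂ c hc)
    | mul h₁ h₂ _ _ ih₁ ih₂ =>
      exact fun c hc => by simpa [mul_assoc] using ih₁ _ (ih₂ c hc)
  have hsep : ∀ j k, j ≠ k → ∃ s ∈ Algebra.adjoin F {μ, ν}, s j ≠ s k := by
    intro j k hjk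
    by_cases hμ : μ j = μ k
    · exact ⟨ν, Algebra.subset_adjoin (by simp), fun hν => hjk (hdist (Prod.ext hμ hν))⟩
    · exact ⟨μ, Algebra.subset_adjoin (by simp), hμ⟩
  have hone : (1 : ι → F) ∈ S := by
    simpa [S, Fintype.linearCombination_apply] using hsum
  simpa [S] using hstab _ (Subalgebra.pi_single_one_mem_of_separates hsep i) 1 hone

end JointEigenvectors

theorem stmt_9_general {F A : Type*} [Field F] [NonUnitalNonAssocRing A] [Module F A]
    [SMulCommClass F A A] [IsScalarTower F A A]
    (a : A)
    (n : ℕ) (μ ν : Fin n → F)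
    (hdist : Function.Injective (fun i => (μ i, ν i)))
    (h00 : ∀ i, (μ i, ν i) ≠ ((0 : F), (0 : F)))
    (h11 : ∀ i, (μ i, ν i) ≠ ((1 : F), (1 : F)))
    (y y₁ y₀ : A) (yi : Fin n → A)
    (hy₁ : a * y₁ = y₁ ∧ y₁ * a = y₁)
    (hy₀ : a * y₀ = 0 ∧ y₀ * a = 0)
    (hyi : ∀ i, a * yi i = μ i • yi i ∧ yi i * a = ν i • yi i)
    (hy : y = y₁ + y₀ + ∑ i, yi i) :
    ∀ M : Submodule F A, (∀ u ∈ M, ∀ v ∈ M, u * v ∈ M) → a ∈ M → y ∈ M →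
      y₁ ∈ M ∧ y₀ ∈ M ∧ ∀ i, yi i ∈ M := by
  intro M hM haM hyM
  let p : Fin n ⊕ Bool → F × F :=
    Sum.elim (fun i => (μ i, ν i)) fun b => bif b then (1, 1) else (0, 0)
  let v : Fin n ⊕ Bool → A := Sum.elim yi fun b => bif b then y₁ else y₀
  have hp : Injective p := by
    refine hdist.sumElim (Bool.injective_iff.mpr (by simp)) fun i b => ?_
    cases b
    exacts [h00 i, h11 i]
  have hL : ∀ j, v j ∈ End.eigenspace (LinearMap.mulLeft F a) (p j).1 := by
    rintro (i | _ | _) <;> simp [p, v, hy₀, hy₁, hyi]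
  have hR : ∀ j, v j ∈ End.eigenspace (LinearMap.mulRight F a) (p j).2 := by
    rintro (i | _ | _) <;> simp [p, v, hy₀, hy₁, hyi]
  have hsum : ∑ j, v j ∈ M := by
    convert hyM using 1
    simp only [v, hy, Fintype.sum_sum_type, Fintype.sum_bool, Sum.elim_inl, Sum.elim_inr,
      cond_true, cond_false]
    abel
  have key := Submodule.mem_of_sum_mem_of_mem_eigenspace _ _ (hM a haM) (hM · · a haM) hp hL hR
    hsum
  exact ⟨key (.inr true), key (.inr false), fun i => key (.inl i)⟩

/-- Let `a` be an idempotent, `(μ₁,ν₁), …, (μ_n,ν_n)` pairwise distinct pairs,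
none equal to `(0,0)` or `(1,1)`, and `y = y₁ + y₀ + Σ yᵢ` with
`a·y₁ = y₁·a = y₁`, `a·y₀ = y₀·a = 0`, `a·yᵢ = μᵢ·yᵢ`, `yᵢ·a = νᵢ·yᵢ`.
Then `y₁`, `y₀` and each `yᵢ` belong to the non-unital subalgebra generated by
`{a, y}`, i.e. to every subspace of `A` containing `a` and `y` that is closed
under multiplication. -/
theorem stmt_9 {F A : Type*} [Field F] [NonUnitalNonAssocRing A] [Module F A]
    [SMulCommClass F A A] [IsScalarTower F A A]
    (hchar : (2 : F) ≠ 0)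
    (a : A) (ha : a * a = a)
    (n : ℕ) (μ ν : Fin n → F)
    (hdist : Function.Injective (fun i => (μ i, ν i)))
    (h00 : ∀ i, (μ i, ν i) ≠ ((0 : F), (0 : F)))
    (h11 : ∀ i, (μ i, ν i) ≠ ((1 : F), (1 : F)))
    (y y₁ y₀ : A) (yi : Fin n → A)
    (hy₁ : a * y₁ = y₁ ∧ y₁ * a = y₁)
    (hy₀ : a * y₀ = 0 ∧ y₀ * a = 0)
    (hyi : ∀ i, a * yi i = μ i • yi i ∧ yi i * a = ν i • yi i)
    (hy : y = y₁ + y₀ + ∑ i, yi i) :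
    ∀ M : Submodule F A, (∀ u ∈ M, ∀ v ∈ M, u * v ∈ M) → a ∈ M → y ∈ M →
      y₁ ∈ M ∧ y₀ ∈ M ∧ ∀ i, yi i ∈ M :=
  stmt_9_general a n μ ν hdist h00 h11 y y₁ y₀ yi hy₁ hy₀ hyi hy
end

section
/- (b·a)·b = b·(a·b) holds if and only if both Σ_{(μ,ν)∈S} (μ − ν)·(b_{μ,ν}·b_{μ,ν}) = 0 and, for every (μ,ν) ∈ S, ν·(b_{μ,ν}·b₀) − μ·(b₀·b_{μ,ν}) = α(μ + ν − 1)(μ − ν)·b_{μ,ν}. -/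
/-- The `(μ, ν)` paired eigenspace of an element `e` of a (not necessarily
associative, commutative or unital) `F`-algebra `A`. -/
def eigSp (F : Type*) {A : Type*} [Field F] [NonUnitalNonAssocRing A] [Module F A]
    [SMulCommClass F A A] [IsScalarTower F A A] (e : A) (μ ν : F) : Submodule F A where
  carrier := {x | e * x = μ • x ∧ x * e = ν • x}
  add_mem' := by
    rintro x y ⟨hx1, hx2⟩ ⟨hy1, hy2⟩
    exact ⟨by rw [mul_add, hx1, hy1, smul_add], by rw [add_mul, hx2, hy2, smul_add]⟩
  zero_mem' := ⟨by rw [mul_zero, smul_zero], by rw [zero_mul, smul_zero]⟩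
  smul_mem' := by
    rintro c x ⟨hx1, hx2⟩
    exact ⟨by rw [mul_smul_comm, hx1, smul_comm], by rw [smul_mul_assoc, hx2, smul_comm]⟩

/-- The family of submodules exhibiting `A` as a direct sum: a distinguished
submodule `E₁` (playing the role of the `(1,1)`-eigenspace), the zero
eigenspace of `a`, and the `(μ, ν)` eigenspaces of `a` for `(μ, ν) ∈ S`. -/
def axisFam (F : Type*) {A : Type*} [Field F] [NonUnitalNonAssocRing A] [Module F A]
    [SMulCommClass F A A] [IsScalarTower F A A] (a : A) (E₁ : Submodule F A)
    (S : Finset (F × F)) : Option (Option {p : F × F // p ∈ S}) → Submodule F A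
  | none => E₁
  | some none => eigSp F a 0 0
  | some (some p) => eigSp F a p.1.1 p.1.2

/-! Expanding `b` along the eigenspaces of `a` and applying the fusion rules, the associator
`(b·a)·b − b·(a·b)` is the sum of `−Σ (μ − ν)·b_{μ,ν}²`, which lies in `F·a + A₀(a)`, and, for each
`(μ,ν) ∈ S`, of the difference of the two sides of the second condition, which lies in
`A_{μ,ν}(a)`. Since the sum of these subspaces is direct, the associator vanishes exactly when
every one of these components does. -/

open Finset

section Axis

variable {F A : Type*} [Field F] [NonUnitalNonAssocRing A] [Module F A]
    [SMulCommClass F A A] [IsScalarTower F A A]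

theorem add_sum_eq_zero_iff_of_iSupIndep_axisFam {a : A} {E₁ : Submodule F A}
    {S : Finset (F × F)} (hindep : iSupIndep (axisFam F a E₁ S)) {y : A}
    (hy : y ∈ E₁ ⊔ eigSp F a 0 0) {t : F × F → A} (ht : ∀ p ∈ S, t p ∈ eigSp F a p.1 p.2) :
    y + ∑ p ∈ S, t p = 0 ↔ y = 0 ∧ ∀ p ∈ S, t p = 0 := by
  constructor
  · intro h
    obtain ⟨y₁, hy₁, y₀, hy₀, rfl⟩ := Submodule.mem_sup.mp hy
    let g : Option (Option S) → A
      | none => y₁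
      | some none => y₀
      | some (some p) => t p
    have hg := (iSupIndep_iff_finsetSum_eq_zero_imp_eq_zero _).mp hindep univ g
      (by rintro (_ | _ | p) -; exacts [hy₁, hy₀, ht p p.2])
      (by simpa [g, Fintype.sum_option, sum_attach S t, add_assoc] using h)
    refine ⟨?_, fun p hp => hg (some (some ⟨p, hp⟩)) (mem_univ _)⟩
    rw [show y₁ = 0 from hg none (mem_univ _), show y₀ = 0 from hg (some none) (mem_univ _),
      add_zero]
  · rintro ⟨rfl, ht⟩
    rw [sum_eq_zero ht, add_zero]

variable {a b b₀ : A} {α : F} {S : Finset (F × F)} {bc : F × F → A}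
    (hb : b = α • a + b₀ + ∑ p ∈ S, bc p)
include hb

theorem decomp_mul_axis (ha : a * a = a) (hb₀ : b₀ ∈ eigSp F a 0 0)
    (hbc : ∀ p ∈ S, bc p ∈ eigSp F a p.1 p.2) : b * a = α • a + ∑ p ∈ S, p.2 • bc p := by
  rw [hb, add_mul, add_mul, smul_mul_assoc, ha, hb₀.2, zero_smul, add_zero, sum_mul]
  exact congrArg _ (sum_congr rfl fun p hp => (hbc p hp).2)

theorem axis_mul_decomp (ha : a * a = a) (hb₀ : b₀ ∈ eigSp F a 0 0)
    (hbc : ∀ p ∈ S, bc p ∈ eigSp F a p.1 p.2) : a * b = α • a + ∑ p ∈ S, p.1 • bc p := by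
  rw [hb, mul_add, mul_add, mul_smul_comm, ha, hb₀.1, zero_smul, add_zero, mul_sum]
  exact congrArg _ (sum_congr rfl fun p hp => (hbc p hp).1)

theorem eigvec_mul_decomp (horth : ∀ p ∈ S, ∀ q ∈ S, p ≠ q → bc p * bc q = 0) {p : F × F}
    (hp : p ∈ S) (hbcp : bc p ∈ eigSp F a p.1 p.2) :
    bc p * b = (α * p.2) • bc p + bc p * b₀ + bc p * bc p := by
  rw [hb, mul_add, mul_add, mul_smul_comm, hbcp.2, smul_smul, mul_sum,
    sum_eq_single_of_mem p hp fun q hq hqp => horth p hp q hq hqp.symm]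

theorem decomp_mul_eigvec (horth : ∀ p ∈ S, ∀ q ∈ S, p ≠ q → bc p * bc q = 0) {p : F × F}
    (hp : p ∈ S) (hbcp : bc p ∈ eigSp F a p.1 p.2) :
    b * bc p = (α * p.1) • bc p + b₀ * bc p + bc p * bc p := by
  rw [hb, add_mul, add_mul, smul_mul_assoc, hbcp.1, smul_smul, sum_mul,
    sum_eq_single_of_mem p hp fun q hq hqp => horth q hq p hp hqp]

theorem decomp_assoc_sub_eq (ha : a * a = a) (hb₀ : b₀ ∈ eigSp F a 0 0)
    (hbc : ∀ p ∈ S, bc p ∈ eigSp F a p.1 p.2)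
    (horth : ∀ p ∈ S, ∀ q ∈ S, p ≠ q → bc p * bc q = 0) :
    (b * a) * b - b * (a * b) = -∑ p ∈ S, (p.1 - p.2) • (bc p * bc p) +
      ∑ p ∈ S, (p.2 • (bc p * b₀) - p.1 • (b₀ * bc p) -
        (α * (p.1 + p.2 - 1) * (p.1 - p.2)) • bc p) := by
  rw [decomp_mul_axis hb ha hb₀ hbc, axis_mul_decomp hb ha hb₀ hbc, add_mul, mul_add,
    smul_mul_assoc, mul_smul_comm, axis_mul_decomp hb ha hb₀ hbc,
    decomp_mul_axis hb ha hb₀ hbc, sum_mul, mul_sum, smul_add, smul_add, smul_sum, smul_sum,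
    add_assoc, add_assoc, add_sub_add_left_eq_sub, ← sum_neg_distrib, ← sum_add_distrib,
    ← sum_add_distrib, ← sum_add_distrib, ← sum_sub_distrib]
  refine sum_congr rfl fun p hp => ?_
  rw [smul_mul_assoc, mul_smul_comm, eigvec_mul_decomp hb horth hp (hbc p hp),
    decomp_mul_eigvec hb horth hp (hbc p hp)]
  module

end Axis

theorem stmt_10_general {F A : Type*} [Field F] [NonUnitalNonAssocRing A] [Module F A]
    [SMulCommClass F A A] [IsScalarTower F A A]
    -- `a` is an idempotent and a weakly primitive `S`-axis:
    (a : A) (ha : a * a = a)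
    (S : Finset (F × F))
    (hindep : iSupIndep (axisFam F a (Submodule.span F {a}) S))
    -- the fusion rules for `a`:
    (fus1 : ∀ p ∈ S, ∀ q ∈ S, p ≠ q →
      ∀ x ∈ eigSp F a p.1 p.2, ∀ y ∈ eigSp F a q.1 q.2, x * y = 0)
    (fus2 : ∀ p ∈ S, ∀ x ∈ eigSp F a p.1 p.2, ∀ y ∈ eigSp F a p.1 p.2,
      x * y ∈ Submodule.span F {a} ⊔ eigSp F a 0 0)
    (fus4 : ∀ p ∈ S, ∀ x ∈ Submodule.span F {a} ⊔ eigSp F a 0 0, ∀ y ∈ eigSp F a p.1 p.2,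
      x * y ∈ eigSp F a p.1 p.2 ∧ y * x ∈ eigSp F a p.1 p.2)
    -- `b` is an idempotent, decomposed along the eigenspaces of `a`:
    (b : A)
    (α : F) (b₀ : A) (hb₀ : b₀ ∈ eigSp F a 0 0)
    (bc : F × F → A) (hbc : ∀ p ∈ S, bc p ∈ eigSp F a p.1 p.2)
    (hbdecomp : b = α • a + b₀ + ∑ p ∈ S, bc p)
    :
    (b * a) * b = b * (a * b) ↔
      ((∑ p ∈ S, (p.1 - p.2) • (bc p * bc p)) = 0 ∧
        ∀ p ∈ S, p.2 • (bc p * b₀) - p.1 • (b₀ * bc p) =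
          (α * (p.1 + p.2 - 1) * (p.1 - p.2)) • bc p) := by
  have horth : ∀ p ∈ S, ∀ q ∈ S, p ≠ q → bc p * bc q = 0 := fun p hp q hq hpq =>
    fus1 p hp q hq hpq _ (hbc p hp) _ (hbc q hq)
  have hsq : -∑ p ∈ S, (p.1 - p.2) • (bc p * bc p) ∈ Submodule.span F {a} ⊔ eigSp F a 0 0 :=
    neg_mem <| sum_mem fun p hp => Submodule.smul_mem _ _ (fus2 p hp _ (hbc p hp) _ (hbc p hp))
  have hdefect : ∀ p ∈ S, p.2 • (bc p * b₀) - p.1 • (b₀ * bc p) -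
      (α * (p.1 + p.2 - 1) * (p.1 - p.2)) • bc p ∈ eigSp F a p.1 p.2 := fun p hp =>
    have hmul := fus4 p hp b₀ (Submodule.mem_sup_right hb₀) (bc p) (hbc p hp)
    sub_mem (sub_mem (Submodule.smul_mem _ _ hmul.2) (Submodule.smul_mem _ _ hmul.1))
      (Submodule.smul_mem _ _ (hbc p hp))
  rw [← sub_eq_zero, decomp_assoc_sub_eq hbdecomp ha hb₀ hbc horth,
    add_sum_eq_zero_iff_of_iSupIndep_axisFam hindep hsq hdefect, neg_eq_zero]
  simp only [sub_eq_zero]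

/-- `(b·a)·b = b·(a·b)` holds if and only if both
`Σ_{(μ,ν)∈S} (μ − ν)·b_{μ,ν}² = 0` and, for every `(μ,ν) ∈ S`,
`ν·(b_{μ,ν}·b₀) − μ·(b₀·b_{μ,ν}) = α(μ + ν − 1)(μ − ν)·b_{μ,ν}`. -/
theorem stmt_10 {F A : Type*} [Field F] [NonUnitalNonAssocRing A] [Module F A]
    [SMulCommClass F A A] [IsScalarTower F A A]
    (hchar : (2 : F) ≠ 0)
    -- `a` is an idempotent and a weakly primitive `S`-axis:
    (a : A) (ha : a * a = a)
    (S : Finset (F × F)) (hS0 : ((0 : F), (0 : F)) ∉ S) (hS1 : ((1 : F), (1 : F)) ∉ S)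
    (hindep : iSupIndep (axisFam F a (Submodule.span F {a}) S))
    (hsup : (⨆ i, axisFam F a (Submodule.span F {a}) S i) = ⊤)
    (hwp : eigSp F a 1 1 = Submodule.span F {a})
    -- the fusion rules for `a`:
    (fus1 : ∀ p ∈ S, ∀ q ∈ S, p ≠ q →
      ∀ x ∈ eigSp F a p.1 p.2, ∀ y ∈ eigSp F a q.1 q.2, x * y = 0)
    (fus2 : ∀ p ∈ S, ∀ x ∈ eigSp F a p.1 p.2, ∀ y ∈ eigSp F a p.1 p.2,
      x * y ∈ Submodule.span F {a} ⊔ eigSp F a 0 0)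
    (fus3 : ∀ x ∈ Submodule.span F {a} ⊔ eigSp F a 0 0,
      ∀ y ∈ Submodule.span F {a} ⊔ eigSp F a 0 0,
      x * y ∈ Submodule.span F {a} ⊔ eigSp F a 0 0)
    (fus4 : ∀ p ∈ S, ∀ x ∈ Submodule.span F {a} ⊔ eigSp F a 0 0, ∀ y ∈ eigSp F a p.1 p.2,
      x * y ∈ eigSp F a p.1 p.2 ∧ y * x ∈ eigSp F a p.1 p.2)
    -- `b` is an idempotent, decomposed along the eigenspaces of `a`:
    (b : A) (hb : b * b = b)
    (α : F) (b₀ : A) (hb₀ : b₀ ∈ eigSp F a 0 0)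
    (bc : F × F → A) (hbc : ∀ p ∈ S, bc p ∈ eigSp F a p.1 p.2)
    (hbdecomp : b = α • a + b₀ + ∑ p ∈ S, bc p)
    :
    (b * a) * b = b * (a * b) ↔
      ((∑ p ∈ S, (p.1 - p.2) • (bc p * bc p)) = 0 ∧
        ∀ p ∈ S, p.2 • (bc p * b₀) - p.1 • (b₀ * bc p) =
          (α * (p.1 + p.2 - 1) * (p.1 - p.2)) • bc p) :=
  stmt_10_general a ha S hindep fus1 fus2 fus4 b α b₀ hb₀ bc hbc hbdecomp
end

section
/- Assume (b·a)·b = b·(a·b), and let (μ,ν) ∈ S with ε := μ + ν ≠ 0. Then b·b_{μ,ν} = (((1 − α)ν + αμ)/ε)·b_{μ,ν} + b_{μ,ν}·b_{μ,ν} and b_{μ,ν}·b = (((1 − α)μ + αν)/ε)·b_{μ,ν} + b_{μ,ν}·b_{μ,ν}. Consequently, the two equations b·b_{μ,ν} = (((1 − α)ν + αμ)/ε)·b_{μ,ν} and b_{μ,ν}·b = (((1 − α)μ + αν)/ε)·b_{μ,ν} hold if and only if b_{μ,ν}·b_{μ,ν} = 0. -/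
open Submodule

/-- Mathlib's `P * Q` of submodules needs a unital associative `A`. -/
abbrev mulSubmodule {F A : Type*} [Field F] [NonUnitalNonAssocRing A] [Module F A]
    [SMulCommClass F A A] [IsScalarTower F A A] (P Q : Submodule F A) : Submodule F A :=
  map₂ (LinearMap.mul F A) P Q

local infixl:70 " ⊙ " => mulSubmodule

section Parity

variable {F A : Type*} [Field F] [NonUnitalNonAssocRing A] [Module F A]
  [SMulCommClass F A A] [IsScalarTower F A A]

theorem mulSubmodule_le_iff {P Q T : Submodule F A} :
    P ⊙ Q ≤ T ↔ ∀ x ∈ P, ∀ y ∈ Q, x * y ∈ T :=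
  map₂_le

theorem mul_mem_of_mulSubmodule_le {P Q T : Submodule F A} (h : P ⊙ Q ≤ T) {x y : A}
    (hx : x ∈ P) (hy : y ∈ Q) : x * y ∈ T :=
  mulSubmodule_le_iff.mp h x hx y hy

/-- The even and the odd part of a `ℤ/2`-grading, without asking for `R ⊔ M = ⊤`. -/
structure IsParityPair (R M : Submodule F A) : Prop where
  disjoint : Disjoint R M
  even_even : R ⊙ R ≤ R
  even_odd : R ⊙ M ≤ M
  odd_even : M ⊙ R ≤ M
  odd_odd : M ⊙ M ≤ R

namespace IsParityPair

variable {R M : Submodule F A} (h : IsParityPair R M) {r r' c c' : A}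
include h

theorem odd_eq_of_add_eq (hr : r ∈ R) (hr' : r' ∈ R) (hc : c ∈ M) (hc' : c' ∈ M)
    (heq : r + c = r' + c') : c = c' := by
  have hmem : c - c' ∈ R := by
    rw [show c - c' = r' - r by rw [sub_eq_sub_iff_add_eq_add, add_comm c, heq]]
    exact sub_mem hr' hr
  exact sub_eq_zero.mp (disjoint_def.mp h.disjoint _ hmem (sub_mem hc hc'))

theorem mul_sub_mem (hr : r ∈ R) (hr' : r' ∈ R) (hc : c ∈ M) (hc' : c' ∈ M) :
    (r + c) * (r' + c') - (r * c' + c * r') ∈ R := by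
  rw [show (r + c) * (r' + c') - (r * c' + c * r') = r * r' + c * c' by noncomm_ring]
  exact add_mem (mul_mem_of_mulSubmodule_le h.even_even hr hr')
    (mul_mem_of_mulSubmodule_le h.odd_odd hc hc')

theorem mul_add_mul_mem (hr : r ∈ R) (hr' : r' ∈ R) (hc : c ∈ M) (hc' : c' ∈ M) :
    r * c' + c * r' ∈ M :=
  add_mem (mul_mem_of_mulSubmodule_le h.even_odd hr hc')
    (mul_mem_of_mulSubmodule_le h.odd_even hc hr')

theorem mul_add_mul_eq_of_isIdempotentElem (hr : r ∈ R) (hc : c ∈ M)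
    (hidem : IsIdempotentElem (r + c)) : r * c + c * r = c := by
  refine h.odd_eq_of_add_eq (h.mul_sub_mem hr hr hc hc) hr (h.mul_add_mul_mem hr hr hc hc) hc ?_
  rw [sub_add_cancel, hidem.eq]

theorem odd_eq_of_mul_mul_comm {a : A} (ha : a ∈ R) (hr : r ∈ R) (hc : c ∈ M)
    (hcomm : ((r + c) * a) * (r + c) = (r + c) * (a * (r + c))) :
    (r * a) * c + (c * a) * r = r * (a * c) + c * (a * r) := by
  have hra := mul_mem_of_mulSubmodule_le h.even_even hr ha
  have har := mul_mem_of_mulSubmodule_le h.even_even ha hr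
  have hca := mul_mem_of_mulSubmodule_le h.odd_even hc ha
  have hac := mul_mem_of_mulSubmodule_le h.even_odd ha hc
  rw [add_mul r c a, mul_add a r c] at hcomm
  refine h.odd_eq_of_add_eq (h.mul_sub_mem hra hr hca hc) (h.mul_sub_mem hr har hc hac)
    (h.mul_add_mul_mem hra hr hca hc) (h.mul_add_mul_mem hr har hc hac) ?_
  rwa [sub_add_cancel, sub_add_cancel]

end IsParityPair

end Parity

theorem eq_smul_of_add_eq_of_smul_add_eq {F V : Type*} [Field F] [AddCommGroup V] [Module F V]
    {α μ ν : F} {x y c : V} (hε : μ + ν ≠ 0) (hsum : x + y = c)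
    (hflex : (α * μ) • c + ν • y = μ • x + (α * ν) • c) :
    x = (((1 - α) * ν + α * μ) / (μ + ν)) • c ∧ y = (((1 - α) * μ + α * ν) / (μ + ν)) • c := by
  obtain rfl : y = c - x := eq_sub_of_add_eq' hsum
  have hx_mul : (μ + ν) • x = ((1 - α) * ν + α * μ) • c := by
    linear_combination (norm := module) -hflex
  have hx : x = (((1 - α) * ν + α * μ) / (μ + ν)) • c := by
    rw [div_eq_inv_mul, mul_smul, ← hx_mul, inv_smul_smul₀ hε]
  refine ⟨hx, ?_⟩
  have hcoeff : ((1 - α) * μ + α * ν) / (μ + ν) + ((1 - α) * ν + α * μ) / (μ + ν) = 1 := by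
    field_simp
    ring
  rw [hx, sub_eq_iff_eq_add, ← add_smul, hcoeff, one_smul]

section Axis

variable {F A : Type*} [Field F] [NonUnitalNonAssocRing A] [Module F A]
  [SMulCommClass F A A] [IsScalarTower F A A]

variable (F) in
def oneZeroSpace (a : A) : Submodule F A :=
  span F {a} ⊔ eigSp F a 0 0

variable (F) in
def otherEigSp (a : A) (S : Finset (F × F)) (q : F × F) : Submodule F A :=
  ⨆ p ∈ (S : Set (F × F)) \ {q}, eigSp F a p.1 p.2

variable (F) in
structure FusionRules (a : A) (S : Finset (F × F)) : Prop where
  eigSp_mul_eigSp_of_ne : ∀ p ∈ S, ∀ q ∈ S, p ≠ q →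
    ∀ x ∈ eigSp F a p.1 p.2, ∀ y ∈ eigSp F a q.1 q.2, x * y = 0
  eigSp_mul_eigSp_self : ∀ p ∈ S, ∀ x ∈ eigSp F a p.1 p.2, ∀ y ∈ eigSp F a p.1 p.2,
    x * y ∈ oneZeroSpace F a
  oneZeroSpace_mul_oneZeroSpace : ∀ x ∈ oneZeroSpace F a, ∀ y ∈ oneZeroSpace F a,
    x * y ∈ oneZeroSpace F a
  oneZeroSpace_mul_eigSp : ∀ p ∈ S, ∀ x ∈ oneZeroSpace F a, ∀ y ∈ eigSp F a p.1 p.2,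
    x * y ∈ eigSp F a p.1 p.2 ∧ y * x ∈ eigSp F a p.1 p.2

variable {a : A} {S : Finset (F × F)} {p q : F × F}

theorem self_mem_oneZeroSpace : a ∈ oneZeroSpace F a :=
  mem_sup_left (mem_span_singleton_self a)

theorem eigSp_le_otherEigSp (hp : p ∈ S) (hne : p ≠ q) :
    eigSp F a p.1 p.2 ≤ otherEigSp F a S q :=
  le_iSup₂_of_le p ⟨hp, hne⟩ le_rfl

theorem disjoint_oneZeroSpace_sup_otherEigSp (hindep : iSupIndep (axisFam F a (span F {a}) S))
    (hq : q ∈ S) : Disjoint (oneZeroSpace F a ⊔ otherEigSp F a S q) (eigSp F a q.1 q.2) := by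
  set i₀ : Option (Option {p // p ∈ S}) := some (some ⟨q, hq⟩)
  have hle : ∀ j ≠ i₀, axisFam F a (span F {a}) S j ≤ ⨆ j ≠ i₀, axisFam F a (span F {a}) S j :=
    fun j hj => le_iSup₂ (f := fun j (_ : j ≠ i₀) => axisFam F a (span F {a}) S j) j hj
  refine (hindep i₀).symm.mono_left (sup_le (sup_le ?_ ?_) (iSup₂_le fun p hp => ?_))
  · exact hle none (by simp [i₀])
  · exact hle (some none) (by simp [i₀])
  · exact hle (some (some ⟨p, hp.1⟩)) (by simpa [i₀] using hp.2)

namespace FusionRules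

variable (hF : FusionRules F a S)
include hF

theorem eigSp_mul_otherEigSp (hq : q ∈ S) : eigSp F a q.1 q.2 ⊙ otherEigSp F a S q = ⊥ := by
  simp only [otherEigSp, mulSubmodule, map₂_iSup_right]
  refine eq_bot_iff.mpr (iSup₂_le fun p hp => mulSubmodule_le_iff.mpr fun x hx y hy => ?_)
  exact (mem_bot F).mpr (hF.eigSp_mul_eigSp_of_ne q hq p hp.1 (Ne.symm hp.2) x hx y hy)

theorem otherEigSp_mul_eigSp (hq : q ∈ S) : otherEigSp F a S q ⊙ eigSp F a q.1 q.2 = ⊥ := by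
  simp only [otherEigSp, mulSubmodule, map₂_iSup_left]
  refine eq_bot_iff.mpr (iSup₂_le fun p hp => mulSubmodule_le_iff.mpr fun x hx y hy => ?_)
  exact (mem_bot F).mpr (hF.eigSp_mul_eigSp_of_ne p hp.1 q hq hp.2 x hx y hy)

theorem oneZeroSpace_mul_otherEigSp :
    oneZeroSpace F a ⊙ otherEigSp F a S q ≤ otherEigSp F a S q := by
  simp only [otherEigSp, mulSubmodule, map₂_iSup_right, iSup₂_le_iff]
  exact fun p hp => mulSubmodule_le_iff.mpr fun x hx y hy =>
    eigSp_le_otherEigSp hp.1 hp.2 (hF.oneZeroSpace_mul_eigSp p hp.1 x hx y hy).1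

theorem otherEigSp_mul_oneZeroSpace :
    otherEigSp F a S q ⊙ oneZeroSpace F a ≤ otherEigSp F a S q := by
  simp only [otherEigSp, mulSubmodule, map₂_iSup_left, iSup₂_le_iff]
  exact fun p hp => mulSubmodule_le_iff.mpr fun x hx y hy =>
    eigSp_le_otherEigSp hp.1 hp.2 (hF.oneZeroSpace_mul_eigSp p hp.1 y hy x hx).2

theorem otherEigSp_mul_otherEigSp :
    otherEigSp F a S q ⊙ otherEigSp F a S q ≤ oneZeroSpace F a := by
  simp only [otherEigSp, mulSubmodule, map₂_iSup_left, map₂_iSup_right, iSup₂_le_iff]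
  intro p' hp' p hp
  refine mulSubmodule_le_iff.mpr fun x hx y hy => ?_
  rcases eq_or_ne p p' with rfl | hne
  · exact hF.eigSp_mul_eigSp_self p hp.1 x hx y hy
  · rw [hF.eigSp_mul_eigSp_of_ne p hp.1 p' hp'.1 hne x hx y hy]
    exact zero_mem _

theorem isParityPair (hindep : iSupIndep (axisFam F a (span F {a}) S)) (hq : q ∈ S) :
    IsParityPair (oneZeroSpace F a ⊔ otherEigSp F a S q) (eigSp F a q.1 q.2) where
  disjoint := disjoint_oneZeroSpace_sup_otherEigSp hindep hq
  even_even := by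
    rw [mulSubmodule, map₂_sup_left, map₂_sup_right, map₂_sup_right]
    refine sup_le (sup_le ?_ ?_) (sup_le ?_ ?_)
    · exact le_sup_of_le_left (mulSubmodule_le_iff.mpr hF.oneZeroSpace_mul_oneZeroSpace)
    · exact le_sup_of_le_right hF.oneZeroSpace_mul_otherEigSp
    · exact le_sup_of_le_right hF.otherEigSp_mul_oneZeroSpace
    · exact le_sup_of_le_left hF.otherEigSp_mul_otherEigSp
  even_odd := by
    rw [mulSubmodule, map₂_sup_left]
    refine sup_le (mulSubmodule_le_iff.mpr fun x hx y hy => ?_)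
      ((hF.otherEigSp_mul_eigSp hq).trans_le bot_le)
    exact (hF.oneZeroSpace_mul_eigSp q hq x hx y hy).1
  odd_even := by
    rw [mulSubmodule, map₂_sup_right]
    refine sup_le (mulSubmodule_le_iff.mpr fun x hx y hy => ?_)
      ((hF.eigSp_mul_otherEigSp hq).trans_le bot_le)
    exact (hF.oneZeroSpace_mul_eigSp q hq y hy x hx).2
  odd_odd := le_sup_of_le_left (mulSubmodule_le_iff.mpr (hF.eigSp_mul_eigSp_self q hq))

theorem mul_mul_eigSp_eq_smul (ha : IsIdempotentElem a) (hq : q ∈ S) (α : F) {b₀ s c : A}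
    (hb₀ : b₀ ∈ eigSp F a 0 0) (hs : s ∈ otherEigSp F a S q) (hc : c ∈ eigSp F a q.1 q.2) :
    ((α • a + b₀ + s) * a) * c = (α * q.1) • c ∧ c * (a * (α • a + b₀ + s)) = (α * q.2) • c := by
  have hsac : (s * a) * c = 0 := (mem_bot F).mp <| mul_mem_of_mulSubmodule_le
    (hF.otherEigSp_mul_eigSp hq).le
    (mul_mem_of_mulSubmodule_le hF.otherEigSp_mul_oneZeroSpace hs self_mem_oneZeroSpace) hc
  have hcas : c * (a * s) = 0 := (mem_bot F).mp <| mul_mem_of_mulSubmodule_le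
    (hF.eigSp_mul_otherEigSp hq).le hc
    (mul_mem_of_mulSubmodule_le hF.oneZeroSpace_mul_otherEigSp self_mem_oneZeroSpace hs)
  constructor
  · simp only [add_mul, smul_mul_assoc, ha.eq, hb₀.2, hc.1, hsac, zero_smul, add_zero, smul_smul]
  · simp only [mul_add, mul_smul_comm, ha.eq, hb₀.1, hc.2, hcas, zero_smul, add_zero, smul_smul]

end FusionRules

end Axis

theorem stmt_12_general {F A : Type*} [Field F] [NonUnitalNonAssocRing A] [Module F A]
    [SMulCommClass F A A] [IsScalarTower F A A]
    -- `a` is an idempotent and a weakly primitive `S`-axis: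
    (a : A) (ha : a * a = a)
    (S : Finset (F × F))
    (hindep : iSupIndep (axisFam F a (Submodule.span F {a}) S))
    -- the fusion rules for `a`:
    (fus1 : ∀ p ∈ S, ∀ q ∈ S, p ≠ q →
      ∀ x ∈ eigSp F a p.1 p.2, ∀ y ∈ eigSp F a q.1 q.2, x * y = 0)
    (fus2 : ∀ p ∈ S, ∀ x ∈ eigSp F a p.1 p.2, ∀ y ∈ eigSp F a p.1 p.2,
      x * y ∈ Submodule.span F {a} ⊔ eigSp F a 0 0)
    (fus3 : ∀ x ∈ Submodule.span F {a} ⊔ eigSp F a 0 0,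
      ∀ y ∈ Submodule.span F {a} ⊔ eigSp F a 0 0,
      x * y ∈ Submodule.span F {a} ⊔ eigSp F a 0 0)
    (fus4 : ∀ p ∈ S, ∀ x ∈ Submodule.span F {a} ⊔ eigSp F a 0 0, ∀ y ∈ eigSp F a p.1 p.2,
      x * y ∈ eigSp F a p.1 p.2 ∧ y * x ∈ eigSp F a p.1 p.2)
    -- `b` is an idempotent, decomposed along the eigenspaces of `a`:
    (b : A) (hb : b * b = b)
    (α : F) (b₀ : A) (hb₀ : b₀ ∈ eigSp F a 0 0)
    (bc : F × F → A) (hbc : ∀ p ∈ S, bc p ∈ eigSp F a p.1 p.2)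
    (hbdecomp : b = α • a + b₀ + ∑ p ∈ S, bc p)
    (hcomm : (b * a) * b = b * (a * b))
    (μ ν : F) (hμν : (μ, ν) ∈ S) (hε : μ + ν ≠ 0) :
    b * bc (μ, ν) =
        (((1 - α) * ν + α * μ) / (μ + ν)) • bc (μ, ν) + bc (μ, ν) * bc (μ, ν) ∧
    bc (μ, ν) * b =
        (((1 - α) * μ + α * ν) / (μ + ν)) • bc (μ, ν) + bc (μ, ν) * bc (μ, ν) ∧
    ((b * bc (μ, ν) = (((1 - α) * ν + α * μ) / (μ + ν)) • bc (μ, ν) ∧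
        bc (μ, ν) * b = (((1 - α) * μ + α * ν) / (μ + ν)) • bc (μ, ν)) ↔
      bc (μ, ν) * bc (μ, ν) = 0) := by
  classical
  have hF : FusionRules F a S := ⟨fus1, fus2, fus3, fus4⟩
  set c := bc (μ, ν)
  set s := ∑ p ∈ S.erase (μ, ν), bc p
  have hc : c ∈ eigSp F a μ ν := hbc _ hμν
  have hs : s ∈ otherEigSp F a S (μ, ν) := sum_mem fun p hp =>
    eigSp_le_otherEigSp (Finset.mem_of_mem_erase hp) (Finset.ne_of_mem_erase hp)
      (hbc p (Finset.mem_of_mem_erase hp))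
  have hr : α • a + b₀ + s ∈ oneZeroSpace F a ⊔ otherEigSp F a S (μ, ν) :=
    add_mem (mem_sup_left (add_mem (smul_mem _ _ self_mem_oneZeroSpace) (mem_sup_right hb₀)))
      (mem_sup_right hs)
  have hbrc : b = (α • a + b₀ + s) + c := by
    rw [hbdecomp, ← Finset.add_sum_erase S bc hμν]
    abel
  rw [hbrc] at hb hcomm ⊢
  have hP := hF.isParityPair hindep hμν
  have hsum := hP.mul_add_mul_eq_of_isIdempotentElem hr hc hb
  have hflex := hP.odd_eq_of_mul_mul_comm (mem_sup_left self_mem_oneZeroSpace) hr hc hcomm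
  obtain ⟨hrac, hcar⟩ := hF.mul_mul_eigSp_eq_smul ha hμν α hb₀ hs hc
  rw [hrac, hcar, hc.1, hc.2, smul_mul_assoc, mul_smul_comm] at hflex
  obtain ⟨hrc, hcr⟩ := eq_smul_of_add_eq_of_smul_add_eq hε hsum hflex
  rw [add_mul, mul_add, hrc, hcr]
  exact ⟨rfl, rfl, by simp only [add_eq_left, and_self]⟩

/-- Assume `(b·a)·b = b·(a·b)`, and let `(μ,ν) ∈ S` with `ε := μ + ν ≠ 0`.  Then
`b·b_{μ,ν} = (((1 − α)ν + αμ)/ε)·b_{μ,ν} + b_{μ,ν}²` and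
`b_{μ,ν}·b = (((1 − α)μ + αν)/ε)·b_{μ,ν} + b_{μ,ν}²`.  Consequently, `b_{μ,ν}`
is a `(((1 − α)ν + αμ)/ε, ((1 − α)μ + αν)/ε)`-eigenvector of `b` if and only if
`b_{μ,ν}² = 0`. -/
theorem stmt_12 {F A : Type*} [Field F] [NonUnitalNonAssocRing A] [Module F A]
    [SMulCommClass F A A] [IsScalarTower F A A]
    (hchar : (2 : F) ≠ 0)
    -- `a` is an idempotent and a weakly primitive `S`-axis:
    (a : A) (ha : a * a = a)
    (S : Finset (F × F)) (hS0 : ((0 : F), (0 : F)) ∉ S) (hS1 : ((1 : F), (1 : F)) ∉ S)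
    (hindep : iSupIndep (axisFam F a (Submodule.span F {a}) S))
    (hsup : (⨆ i, axisFam F a (Submodule.span F {a}) S i) = ⊤)
    (hwp : eigSp F a 1 1 = Submodule.span F {a})
    -- the fusion rules for `a`:
    (fus1 : ∀ p ∈ S, ∀ q ∈ S, p ≠ q →
      ∀ x ∈ eigSp F a p.1 p.2, ∀ y ∈ eigSp F a q.1 q.2, x * y = 0)
    (fus2 : ∀ p ∈ S, ∀ x ∈ eigSp F a p.1 p.2, ∀ y ∈ eigSp F a p.1 p.2,
      x * y ∈ Submodule.span F {a} ⊔ eigSp F a 0 0)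
    (fus3 : ∀ x ∈ Submodule.span F {a} ⊔ eigSp F a 0 0,
      ∀ y ∈ Submodule.span F {a} ⊔ eigSp F a 0 0,
      x * y ∈ Submodule.span F {a} ⊔ eigSp F a 0 0)
    (fus4 : ∀ p ∈ S, ∀ x ∈ Submodule.span F {a} ⊔ eigSp F a 0 0, ∀ y ∈ eigSp F a p.1 p.2,
      x * y ∈ eigSp F a p.1 p.2 ∧ y * x ∈ eigSp F a p.1 p.2)
    -- `b` is an idempotent, decomposed along the eigenspaces of `a`:
    (b : A) (hb : b * b = b)
    (α : F) (b₀ : A) (hb₀ : b₀ ∈ eigSp F a 0 0)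
    (bc : F × F → A) (hbc : ∀ p ∈ S, bc p ∈ eigSp F a p.1 p.2)
    (hbdecomp : b = α • a + b₀ + ∑ p ∈ S, bc p)
    (hcomm : (b * a) * b = b * (a * b))
    (μ ν : F) (hμν : (μ, ν) ∈ S) (hε : μ + ν ≠ 0) :
    b * bc (μ, ν) =
        (((1 - α) * ν + α * μ) / (μ + ν)) • bc (μ, ν) + bc (μ, ν) * bc (μ, ν) ∧
    bc (μ, ν) * b =
        (((1 - α) * μ + α * ν) / (μ + ν)) • bc (μ, ν) + bc (μ, ν) * bc (μ, ν) ∧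
    ((b * bc (μ, ν) = (((1 - α) * ν + α * μ) / (μ + ν)) • bc (μ, ν) ∧
        bc (μ, ν) * b = (((1 - α) * μ + α * ν) / (μ + ν)) • bc (μ, ν)) ↔
      bc (μ, ν) * bc (μ, ν) = 0) :=
  stmt_12_general a ha S hindep fus1 fus2 fus3 fus4 b hb α b₀ hb₀ bc hbc hbdecomp hcomm μ ν hμν hε
end

section
/- b₀·b₀ − b₀ = (α − α²)·a − Σ_{(μ,ν)∈S} b_{μ,ν}·b_{μ,ν}. -/
/-!
Expand `b * b - b` along the decomposition `b = x + ∑ b_{μ,ν}` with `x = α a + b₀`. Distinct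
eigenspaces annihilate each other, so the cross terms disappear and
`b * b - b = (x * x - x + ∑ b_{μ,ν} b_{μ,ν}) + ∑ (x b_{μ,ν} + b_{μ,ν} x - b_{μ,ν})`.
By the fusion rules the first bracket lies in `F a + A₀(a)` and the second sum in
`⨁ A_{μ,ν}(a)`; as the sum of eigenspaces is direct and `b * b - b = 0`, the first bracket is
zero, and `x * x - x = (α² - α) a + b₀ b₀ - b₀` because `a` is idempotent and `a b₀ = b₀ a = 0`.
-/

lemma add_sum_mul_self_sub_add_sum {ι R : Type*} [NonUnitalNonAssocRing R] (s : Finset ι)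
    (x : R) (c : ι → R) (hc : ∀ p ∈ s, ∀ q ∈ s, p ≠ q → c p * c q = 0) :
    (x + ∑ p ∈ s, c p) * (x + ∑ p ∈ s, c p) - (x + ∑ p ∈ s, c p) =
      (x * x - x + ∑ p ∈ s, c p * c p) + ∑ p ∈ s, (x * c p + c p * x - c p) := by
  have hcc : (∑ p ∈ s, c p) * (∑ q ∈ s, c q) = ∑ p ∈ s, c p * c p := by
    rw [Finset.sum_mul_sum]
    refine Finset.sum_congr rfl fun p hp => Finset.sum_eq_single p (fun q hq hqp => ?_) (absurd hp)
    exact hc p hp q hq (Ne.symm hqp)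
  rw [add_mul, mul_add, mul_add, hcc, Finset.mul_sum, Finset.sum_mul, Finset.sum_sub_distrib,
    Finset.sum_add_distrib]
  abel

section
variable {F A : Type*} [Field F] [NonUnitalNonAssocRing A] [Module F A]
    [SMulCommClass F A A] [IsScalarTower F A A]

lemma disjoint_sup_eigSp_zero_iSup_eigSp {a : A} {E₁ : Submodule F A} {S : Finset (F × F)}
    (hindep : iSupIndep (axisFam F a E₁ S)) :
    Disjoint (E₁ ⊔ eigSp F a 0 0) (⨆ p : {p // p ∈ S}, eigSp F a p.1.1 p.1.2) := by
  have h := hindep.disjoint_biSup_biSup (s := {none, some none}) (t := Set.range (some ∘ some))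
    (by simp [Set.disjoint_left])
  refine h.mono (le_of_eq ?_) (iSup_le fun p => ?_)
  · simp only [iSup_insert, iSup_singleton]; rfl
  · exact le_biSup (axisFam F a E₁ S) (Set.mem_range_self (f := some ∘ some) p)

lemma smul_add_mul_self_sub {a b₀ : A} (ha : a * a = a) (hb₀ : b₀ ∈ eigSp F a 0 0) (α : F) :
    (α • a + b₀) * (α • a + b₀) - (α • a + b₀) = (α ^ 2 - α) • a + (b₀ * b₀ - b₀) := by
  have hab₀ : a * b₀ = 0 := by rw [hb₀.1, zero_smul]
  have hb₀a : b₀ * a = 0 := by rw [hb₀.2, zero_smul]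
  simp only [add_mul, mul_add, smul_mul_assoc, mul_smul_comm, ha, hab₀, hb₀a, smul_zero]
  module

end

theorem stmt_13_general {F A : Type*} [Field F] [NonUnitalNonAssocRing A] [Module F A]
    [SMulCommClass F A A] [IsScalarTower F A A]
    -- `a` is an idempotent and a weakly primitive `S`-axis:
    (a : A) (ha : a * a = a)
    (S : Finset (F × F))
    (hindep : iSupIndep (axisFam F a (Submodule.span F {a}) S))
    -- the fusion rules for `a`:
    (fus1 : ∀ p ∈ S, ∀ q ∈ S, p ≠ q →
      ∀ x ∈ eigSp F a p.1 p.2, ∀ y ∈ eigSp F a q.1 q.2, x * y = 0)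
    (fus2 : ∀ p ∈ S, ∀ x ∈ eigSp F a p.1 p.2, ∀ y ∈ eigSp F a p.1 p.2,
      x * y ∈ Submodule.span F {a} ⊔ eigSp F a 0 0)
    (fus3 : ∀ x ∈ Submodule.span F {a} ⊔ eigSp F a 0 0,
      ∀ y ∈ Submodule.span F {a} ⊔ eigSp F a 0 0,
      x * y ∈ Submodule.span F {a} ⊔ eigSp F a 0 0)
    (fus4 : ∀ p ∈ S, ∀ x ∈ Submodule.span F {a} ⊔ eigSp F a 0 0, ∀ y ∈ eigSp F a p.1 p.2,
      x * y ∈ eigSp F a p.1 p.2 ∧ y * x ∈ eigSp F a p.1 p.2)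
    -- `b` is an idempotent, decomposed along the eigenspaces of `a`:
    (b : A) (hb : b * b = b)
    (α : F) (b₀ : A) (hb₀ : b₀ ∈ eigSp F a 0 0)
    (bc : F × F → A) (hbc : ∀ p ∈ S, bc p ∈ eigSp F a p.1 p.2)
    (hbdecomp : b = α • a + b₀ + ∑ p ∈ S, bc p)
    :
    b₀ * b₀ - b₀ = (α - α ^ 2) • a - ∑ p ∈ S, bc p * bc p := by
  set E := Submodule.span F {a} ⊔ eigSp F a 0 0
  set x := α • a + b₀
  have hb₀E : b₀ ∈ E := Submodule.mem_sup_right hb₀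
  have hxE : x ∈ E :=
    E.add_mem (Submodule.mem_sup_left (Submodule.smul_mem _ α (Submodule.mem_span_singleton_self a)))
      hb₀E
  have hXE : (α ^ 2 - α) • a + (b₀ * b₀ - b₀) + ∑ p ∈ S, bc p * bc p ∈ E :=
    E.add_mem (E.add_mem (Submodule.mem_sup_left (Submodule.smul_mem _ _
      (Submodule.mem_span_singleton_self a))) (E.sub_mem (fus3 b₀ hb₀E b₀ hb₀E) hb₀E))
      (E.sum_mem fun p hp => fus2 p hp _ (hbc p hp) _ (hbc p hp))
  have hYR : ∑ p ∈ S, (x * bc p + bc p * x - bc p) ∈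
      ⨆ p : {p // p ∈ S}, eigSp F a p.1.1 p.1.2 :=
    Submodule.sum_mem _ fun p hp => Submodule.mem_iSup_of_mem ⟨p, hp⟩ <| by
      obtain ⟨hxc, hcx⟩ := fus4 p hp x hxE (bc p) (hbc p hp)
      exact sub_mem (add_mem hxc hcx) (hbc p hp)
  have hsum := add_sum_mul_self_sub_add_sum S x bc
    fun p hp q hq hpq => fus1 p hp q hq hpq _ (hbc p hp) _ (hbc q hq)
  rw [smul_add_mul_self_sub ha hb₀, ← hbdecomp, hb, sub_self] at hsum
  have hX0 := (Submodule.disjoint_iff_add_eq_zero.mp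
    (disjoint_sup_eigSp_zero_iSup_eigSp hindep) hXE hYR hsum.symm).1
  linear_combination (norm := module) hX0

/-- `b₀·b₀ − b₀ = (α − α²)·a − Σ_{(μ,ν)∈S} b_{μ,ν}·b_{μ,ν}`. -/
theorem stmt_13 {F A : Type*} [Field F] [NonUnitalNonAssocRing A] [Module F A]
    [SMulCommClass F A A] [IsScalarTower F A A]
    (hchar : (2 : F) ≠ 0)
    -- `a` is an idempotent and a weakly primitive `S`-axis:
    (a : A) (ha : a * a = a)
    (S : Finset (F × F)) (hS0 : ((0 : F), (0 : F)) ∉ S) (hS1 : ((1 : F), (1 : F)) ∉ S)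
    (hindep : iSupIndep (axisFam F a (Submodule.span F {a}) S))
    (hsup : (⨆ i, axisFam F a (Submodule.span F {a}) S i) = ⊤)
    (hwp : eigSp F a 1 1 = Submodule.span F {a})
    -- the fusion rules for `a`:
    (fus1 : ∀ p ∈ S, ∀ q ∈ S, p ≠ q →
      ∀ x ∈ eigSp F a p.1 p.2, ∀ y ∈ eigSp F a q.1 q.2, x * y = 0)
    (fus2 : ∀ p ∈ S, ∀ x ∈ eigSp F a p.1 p.2, ∀ y ∈ eigSp F a p.1 p.2,
      x * y ∈ Submodule.span F {a} ⊔ eigSp F a 0 0)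
    (fus3 : ∀ x ∈ Submodule.span F {a} ⊔ eigSp F a 0 0,
      ∀ y ∈ Submodule.span F {a} ⊔ eigSp F a 0 0,
      x * y ∈ Submodule.span F {a} ⊔ eigSp F a 0 0)
    (fus4 : ∀ p ∈ S, ∀ x ∈ Submodule.span F {a} ⊔ eigSp F a 0 0, ∀ y ∈ eigSp F a p.1 p.2,
      x * y ∈ eigSp F a p.1 p.2 ∧ y * x ∈ eigSp F a p.1 p.2)
    -- `b` is an idempotent, decomposed along the eigenspaces of `a`:
    (b : A) (hb : b * b = b)
    (α : F) (b₀ : A) (hb₀ : b₀ ∈ eigSp F a 0 0)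
    (bc : F × F → A) (hbc : ∀ p ∈ S, bc p ∈ eigSp F a p.1 p.2)
    (hbdecomp : b = α • a + b₀ + ∑ p ∈ S, bc p)
    :
    b₀ * b₀ - b₀ = (α - α ^ 2) • a - ∑ p ∈ S, bc p * bc p :=
  stmt_13_general a ha S hindep fus1 fus2 fus3 fus4 b hb α b₀ hb₀ bc hbc hbdecomp
end

section
/- Assume b·(x·b) = (b·x)·b for all x ∈ A, that b₀·x = x·b₀ for every x ∈ A₀(a) (A₀(a) is commutative), and that 2α ≠ 1. Then b_{μ,ν}·b_{μ,ν} = 0 for every (μ,ν) ∈ S with μ ≠ ν. -/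
theorem Finset.add_sum_mul_add_sum {ι R : Type*} [NonUnitalNonAssocSemiring R] {s : Finset ι}
    (x x' : R) {y y' : ι → R} (h : ∀ i ∈ s, ∀ j ∈ s, i ≠ j → y i * y' j = 0) :
    (x + ∑ i ∈ s, y i) * (x' + ∑ i ∈ s, y' i) =
      (x * x' + ∑ i ∈ s, y i * y' i) + ∑ i ∈ s, (x * y' i + y i * x') := by
  have hdiag : ∑ i ∈ s, y i * ∑ j ∈ s, y' j = ∑ i ∈ s, y i * y' i := by
    refine Finset.sum_congr rfl fun i hi => ?_
    rw [Finset.mul_sum]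
    exact Finset.sum_eq_single_of_mem i hi fun j hj hji => h i hi j hj hji.symm
  rw [add_mul, mul_add, mul_add, Finset.mul_sum, Finset.sum_mul, Finset.sum_mul, hdiag,
    Finset.sum_add_distrib]
  abel

section Axis

variable {F A : Type*} [Field F] [NonUnitalNonAssocRing A] [Module F A]
    [SMulCommClass F A A] [IsScalarTower F A A]

theorem mem_eigSp_iff {e x : A} {μ ν : F} :
    x ∈ eigSp F e μ ν ↔ e * x = μ • x ∧ x * e = ν • x := Iff.rfl

theorem mem_eigSp_zero_iff {e x : A} : x ∈ eigSp F e 0 0 ↔ e * x = 0 ∧ x * e = 0 := by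
  simp only [mem_eigSp_iff, zero_smul]

variable (F) in
def evenPart (a : A) : Submodule F A := Submodule.span F {a} ⊔ eigSp F a 0 0

theorem self_mem_evenPart (a : A) : a ∈ evenPart F a :=
  Submodule.mem_sup_left (Submodule.mem_span_singleton_self a)

structure SatisfiesFusion (a : A) (S : Finset (F × F)) : Prop where
  mul_eq_zero_of_ne : ∀ p ∈ S, ∀ q ∈ S, p ≠ q →
    ∀ x ∈ eigSp F a p.1 p.2, ∀ y ∈ eigSp F a q.1 q.2, x * y = 0
  mul_mem_evenPart : ∀ p ∈ S, ∀ x ∈ eigSp F a p.1 p.2, ∀ y ∈ eigSp F a p.1 p.2,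
    x * y ∈ evenPart F a
  evenPart_mul_mem : ∀ x ∈ evenPart F a, ∀ y ∈ evenPart F a, x * y ∈ evenPart F a
  evenPart_mul_mem_eigSp : ∀ p ∈ S, ∀ x ∈ evenPart F a, ∀ y ∈ eigSp F a p.1 p.2,
    x * y ∈ eigSp F a p.1 p.2 ∧ y * x ∈ eigSp F a p.1 p.2

structure IsAxisDecomp (a : A) (S : Finset (F × F)) (z x : A) (y : F × F → A) : Prop where
  mem_evenPart : x ∈ evenPart F a
  mem_eigSp : ∀ p ∈ S, y p ∈ eigSp F a p.1 p.2
  eq_add_sum : z = x + ∑ p ∈ S, y p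

variable {a : A} {S : Finset (F × F)}

theorem isAxisDecomp_self : IsAxisDecomp a S a a 0 :=
  ⟨self_mem_evenPart a, fun _ _ => zero_mem _, by simp⟩

theorem isAxisDecomp_of_mem_eigSp [DecidableEq (F × F)] {p : F × F} (hp : p ∈ S) {x : A}
    (hx : x ∈ eigSp F a p.1 p.2) : IsAxisDecomp a S x 0 (Pi.single p x) := by
  refine ⟨zero_mem _, fun q _ => ?_, by simp [Finset.sum_pi_single', hp]⟩
  rcases eq_or_ne q p with rfl | hqp
  · simpa using hx
  · simp [hqp]

theorem IsAxisDecomp.unique (hindep : iSupIndep (axisFam F a (Submodule.span F {a}) S))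
    {z x x' : A} {y y' : F × F → A} (h : IsAxisDecomp a S z x y)
    (h' : IsAxisDecomp a S z x' y') : x = x' ∧ ∀ p ∈ S, y p = y' p := by
  obtain ⟨x₁, hx₁, x₀, hx₀, rfl⟩ := Submodule.mem_sup.mp h.mem_evenPart
  obtain ⟨x₁', hx₁', x₀', hx₀', rfl⟩ := Submodule.mem_sup.mp h'.mem_evenPart
  let v : Option (Option S) → A := fun o => o.elim x₁ fun o => o.elim x₀ fun q => y q
  let v' : Option (Option S) → A := fun o => o.elim x₁' fun o => o.elim x₀' fun q => y' q
  have hsum : ∑ o, v o = ∑ o, v' o := by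
    simp only [v, v', Fintype.sum_option, Option.elim_none, Option.elim_some,
      Finset.sum_coe_sort S y, Finset.sum_coe_sort S y', ← add_assoc]
    rw [← h.eq_add_sum, ← h'.eq_add_sum]
  have hcomp := (iSupIndep_iff_finsetSum_eq_imp_eq _).mp hindep Finset.univ v v'
    (by
      rintro (_ | _ | q) -
      exacts [⟨hx₁, hx₁'⟩, ⟨hx₀, hx₀'⟩, ⟨h.mem_eigSp q q.2, h'.mem_eigSp q q.2⟩])
    hsum
  exact ⟨congrArg₂ (· + ·) (hcomp none (Finset.mem_univ _))
    (hcomp (some none) (Finset.mem_univ _)),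
    fun p hp => hcomp (some (some ⟨p, hp⟩)) (Finset.mem_univ _)⟩

theorem IsAxisDecomp.mul (hfus : SatisfiesFusion a S) {z z' x x' : A} {y y' : F × F → A}
    (h : IsAxisDecomp a S z x y) (h' : IsAxisDecomp a S z' x' y') :
    IsAxisDecomp a S (z * z') (x * x' + ∑ p ∈ S, y p * y' p) (fun p => x * y' p + y p * x') where
  mem_evenPart := add_mem (hfus.evenPart_mul_mem x h.mem_evenPart x' h'.mem_evenPart)
    (Submodule.sum_mem _ fun p hp =>
      hfus.mul_mem_evenPart p hp _ (h.mem_eigSp p hp) _ (h'.mem_eigSp p hp))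
  mem_eigSp p hp := add_mem
    (hfus.evenPart_mul_mem_eigSp p hp x h.mem_evenPart _ (h'.mem_eigSp p hp)).1
    (hfus.evenPart_mul_mem_eigSp p hp x' h'.mem_evenPart _ (h.mem_eigSp p hp)).2
  eq_add_sum := by
    rw [h.eq_add_sum, h'.eq_add_sum]
    exact Finset.add_sum_mul_add_sum x x' fun p hp q hq hpq =>
      hfus.mul_eq_zero_of_ne p hp q hq hpq _ (h.mem_eigSp p hp) _ (h'.mem_eigSp q hq)

theorem commute_smul_add_of_mem_evenPart (ha : a * a = a) {b₀ : A} (hb₀ : b₀ ∈ eigSp F a 0 0)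
    (hcomm : ∀ x ∈ eigSp F a 0 0, b₀ * x = x * b₀) (α : F) {x : A} (hx : x ∈ evenPart F a) :
    Commute (α • a + b₀) x := by
  obtain ⟨x₁, hx₁, x₀, hx₀, rfl⟩ := Submodule.mem_sup.mp hx
  obtain ⟨β, rfl⟩ := Submodule.mem_span_singleton.mp hx₁
  obtain ⟨hab₀, hb₀a⟩ := mem_eigSp_zero_iff.mp hb₀
  obtain ⟨hax₀, hx₀a⟩ := mem_eigSp_zero_iff.mp hx₀
  simp only [Commute, SemiconjBy, mul_add, add_mul, smul_mul_assoc, mul_smul_comm, ha, hab₀,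
    hb₀a, hax₀, hx₀a, hcomm x₀ hx₀, smul_zero, add_zero, zero_add, smul_smul, mul_comm α β]

theorem mul_smul_add_of_mem_eigSp_zero (ha : a * a = a) {b₀ : A} (hb₀ : b₀ ∈ eigSp F a 0 0)
    (α : F) :
    a * (α • a + b₀) = α • a ∧ (α • a + b₀) * a = α • a := by
  obtain ⟨hab₀, hb₀a⟩ := mem_eigSp_zero_iff.mp hb₀
  simp only [mul_add, add_mul, mul_smul_comm, smul_mul_assoc, ha, hab₀, hb₀a, add_zero,
    and_self]

theorem IsAxisDecomp.mul_add_mul_eq_of_isIdempotentElem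
    (hindep : iSupIndep (axisFam F a (Submodule.span F {a}) S)) (hfus : SatisfiesFusion a S)
    {b u : A} {y : F × F → A} (hb : IsAxisDecomp a S b u y) (hbb : IsIdempotentElem b) :
    ∀ p ∈ S, u * y p + y p * u = y p :=
  ((hb.mul hfus hb).unique hindep (hbb.eq ▸ hb)).2

theorem IsAxisDecomp.smul_mul_add_eq_of_flexible
    (hindep : iSupIndep (axisFam F a (Submodule.span F {a}) S)) (hfus : SatisfiesFusion a S)
    {b u : A} {y : F × F → A} (hb : IsAxisDecomp a S b u y) {α : F} (hau : a * u = α • a)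
    (hua : u * a = α • a) (hflex : b * (a * b) = b * a * b) :
    ∀ p ∈ S, p.1 • (u * y p) + (α * p.2) • y p = (α * p.1) • y p + p.2 • (y p * u) := by
  intro p hp
  have h := ((hb.mul hfus (isAxisDecomp_self.mul hfus hb)).unique hindep
    (hflex ▸ (hb.mul hfus isAxisDecomp_self).mul hfus hb)).2 p hp
  obtain ⟨hay, hya⟩ := mem_eigSp_iff.mp (hb.mem_eigSp p hp)
  simpa only [Pi.zero_apply, zero_mul, mul_zero, Finset.sum_const_zero, add_zero, zero_add, hau,
    hua, hay, hya, mul_smul_comm, smul_mul_assoc, smul_smul, mul_comm p.2 α] using h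

theorem IsAxisDecomp.mul_mul_eq_of_flexible
    (hindep : iSupIndep (axisFam F a (Submodule.span F {a}) S)) (hfus : SatisfiesFusion a S)
    {b u : A} {y : F × F → A} (hb : IsAxisDecomp a S b u y) {p : F × F} (hp : p ∈ S)
    (hcomm : Commute u (y p * y p)) (hflex : b * (y p * b) = b * y p * b) :
    y p * (y p * u) = u * y p * y p := by
  classical
  have hy := isAxisDecomp_of_mem_eigSp hp (hb.mem_eigSp p hp)
  have h := ((hb.mul hfus (hy.mul hfus hb)).unique hindep
    (hflex ▸ (hb.mul hfus hy).mul hfus hb)).1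
  simp only [zero_mul, Pi.single_apply, ite_mul, Finset.sum_ite_eq', hp, ↓reduceIte, zero_add,
    mul_ite, mul_zero, add_zero] at h
  rw [hcomm.eq] at h
  exact add_left_cancel h

theorem mul_self_eq_zero_of_eigen_relations {u B : A} {α μ ν : F} (h₁ : u * B + B * u = B)
    (h₃ : μ • (u * B) + (α * ν) • B = (α * μ) • B + ν • (B * u))
    (h₅ : B * (B * u) = u * B * B) (hμν : μ ≠ ν) (hα : 2 * α ≠ 1) : B * B = 0 := by
  have huB : (μ + ν) • (u * B) = (ν + α * μ - α * ν) • B := by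
    linear_combination (norm := module) ν • h₁ + h₃
  have hBu : (μ + ν) • (B * u) = (μ + α * ν - α * μ) • B := by
    linear_combination (norm := module) μ • h₁ - h₃
  have h : ((ν - μ) * (1 - 2 * α)) • (B * B) = 0 := by
    calc ((ν - μ) * (1 - 2 * α)) • (B * B)
        = (ν + α * μ - α * ν) • B * B - B * ((μ + α * ν - α * μ) • B) := by
          rw [smul_mul_assoc, mul_smul_comm]; module
      _ = 0 := by rw [← huB, ← hBu, smul_mul_assoc, mul_smul_comm, h₅, sub_self]
  exact (smul_eq_zero.mp h).resolve_left
    (mul_ne_zero (sub_ne_zero.mpr hμν.symm) (sub_ne_zero.mpr hα.symm))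

end Axis

theorem stmt_15_general {F A : Type*} [Field F] [NonUnitalNonAssocRing A] [Module F A]
    [SMulCommClass F A A] [IsScalarTower F A A]
    -- `a` is an idempotent and a weakly primitive `S`-axis:
    (a : A) (ha : a * a = a)
    (S : Finset (F × F))
    (hindep : iSupIndep (axisFam F a (Submodule.span F {a}) S))
    -- the fusion rules for `a`:
    (fus1 : ∀ p ∈ S, ∀ q ∈ S, p ≠ q →
      ∀ x ∈ eigSp F a p.1 p.2, ∀ y ∈ eigSp F a q.1 q.2, x * y = 0)
    (fus2 : ∀ p ∈ S, ∀ x ∈ eigSp F a p.1 p.2, ∀ y ∈ eigSp F a p.1 p.2,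
      x * y ∈ Submodule.span F {a} ⊔ eigSp F a 0 0)
    (fus3 : ∀ x ∈ Submodule.span F {a} ⊔ eigSp F a 0 0,
      ∀ y ∈ Submodule.span F {a} ⊔ eigSp F a 0 0,
      x * y ∈ Submodule.span F {a} ⊔ eigSp F a 0 0)
    (fus4 : ∀ p ∈ S, ∀ x ∈ Submodule.span F {a} ⊔ eigSp F a 0 0, ∀ y ∈ eigSp F a p.1 p.2,
      x * y ∈ eigSp F a p.1 p.2 ∧ y * x ∈ eigSp F a p.1 p.2)
    -- `b` is an idempotent, decomposed along the eigenspaces of `a`: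
    (b : A) (hb : b * b = b)
    (α : F) (b₀ : A) (hb₀ : b₀ ∈ eigSp F a 0 0)
    (bc : F × F → A) (hbc : ∀ p ∈ S, bc p ∈ eigSp F a p.1 p.2)
    (hbdecomp : b = α • a + b₀ + ∑ p ∈ S, bc p)
    (hax : ∀ x : A, b * (x * b) = (b * x) * b)
    (hA0comm : ∀ x ∈ eigSp F a 0 0, b₀ * x = x * b₀)
    (hα : 2 * α ≠ 1) :
    ∀ p ∈ S, p.1 ≠ p.2 → bc p * bc p = 0 := by
  intro p hp hμν
  have hfus : SatisfiesFusion a S := ⟨fus1, fus2, fus3, fus4⟩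
  have hu : α • a + b₀ ∈ evenPart F a :=
    add_mem (Submodule.smul_mem _ α (self_mem_evenPart a)) (Submodule.mem_sup_right hb₀)
  have hdecomp : IsAxisDecomp a S b (α • a + b₀) bc := ⟨hu, hbc, hbdecomp⟩
  obtain ⟨hau, hua⟩ := mul_smul_add_of_mem_eigSp_zero ha hb₀ α
  refine mul_self_eq_zero_of_eigen_relations
    (hdecomp.mul_add_mul_eq_of_isIdempotentElem hindep hfus hb p hp)
    (hdecomp.smul_mul_add_eq_of_flexible hindep hfus hau hua (hax a) p hp)
    (hdecomp.mul_mul_eq_of_flexible hindep hfus hp ?_ (hax (bc p))) hμν hα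
  exact commute_smul_add_of_mem_evenPart ha hb₀ hA0comm α
    (hfus.mul_mem_evenPart p hp _ (hbc p hp) _ (hbc p hp))

/-- Assume `b·(x·b) = (b·x)·b` for all `x ∈ A`, that `b₀` commutes with every
element of `A₀(a)`, and that `2α ≠ 1`.  Then `b_{μ,ν}·b_{μ,ν} = 0` for every
`(μ,ν) ∈ S` with `μ ≠ ν`. -/
theorem stmt_15 {F A : Type*} [Field F] [NonUnitalNonAssocRing A] [Module F A]
    [SMulCommClass F A A] [IsScalarTower F A A]
    (hchar : (2 : F) ≠ 0)
    -- `a` is an idempotent and a weakly primitive `S`-axis: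
    (a : A) (ha : a * a = a)
    (S : Finset (F × F)) (hS0 : ((0 : F), (0 : F)) ∉ S) (hS1 : ((1 : F), (1 : F)) ∉ S)
    (hindep : iSupIndep (axisFam F a (Submodule.span F {a}) S))
    (hsup : (⨆ i, axisFam F a (Submodule.span F {a}) S i) = ⊤)
    (hwp : eigSp F a 1 1 = Submodule.span F {a})
    -- the fusion rules for `a`:
    (fus1 : ∀ p ∈ S, ∀ q ∈ S, p ≠ q →
      ∀ x ∈ eigSp F a p.1 p.2, ∀ y ∈ eigSp F a q.1 q.2, x * y = 0)
    (fus2 : ∀ p ∈ S, ∀ x ∈ eigSp F a p.1 p.2, ∀ y ∈ eigSp F a p.1 p.2,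
      x * y ∈ Submodule.span F {a} ⊔ eigSp F a 0 0)
    (fus3 : ∀ x ∈ Submodule.span F {a} ⊔ eigSp F a 0 0,
      ∀ y ∈ Submodule.span F {a} ⊔ eigSp F a 0 0,
      x * y ∈ Submodule.span F {a} ⊔ eigSp F a 0 0)
    (fus4 : ∀ p ∈ S, ∀ x ∈ Submodule.span F {a} ⊔ eigSp F a 0 0, ∀ y ∈ eigSp F a p.1 p.2,
      x * y ∈ eigSp F a p.1 p.2 ∧ y * x ∈ eigSp F a p.1 p.2)
    -- `b` is an idempotent, decomposed along the eigenspaces of `a`: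
    (b : A) (hb : b * b = b)
    (α : F) (b₀ : A) (hb₀ : b₀ ∈ eigSp F a 0 0)
    (bc : F × F → A) (hbc : ∀ p ∈ S, bc p ∈ eigSp F a p.1 p.2)
    (hbdecomp : b = α • a + b₀ + ∑ p ∈ S, bc p)
    (hax : ∀ x : A, b * (x * b) = (b * x) * b)
    (hA0comm : ∀ x ∈ eigSp F a 0 0, b₀ * x = x * b₀)
    (hα : 2 * α ≠ 1) :
    ∀ p ∈ S, p.1 ≠ p.2 → bc p * bc p = 0 :=
  stmt_15_general a ha S hindep fus1 fus2 fus3 fus4 b hb α b₀ hb₀ bc hbc hbdecomp hax hA0comm hα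
end
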